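/- arXiv:1511.01661 — 7 statements merged into one kernel-verified Lean document; each statement's English description precedes it below -/
import Mathlib

section
/- Every out-tree with an even number of vertices contains a spanning subgraph that is a weak perfect out-forest, i.e., an out-forest in which every vertex has odd degree in the underlying graph. -/
/-- `F` is a subdigraph of `D` (same vertex set, arcs included). -/
def Subd {V : Type*} (F D : V → V → Prop) : Prop := ∀ ⦃a b⦄, F a b → D a b

/-- An out-forest: acyclic (no directed cycles) and all in-degrees at most one. -/
def IsOutForest {V : Type*} (F : V → V → Prop) : Prop :=
  Irreflexive (Relation.TransGen F) ∧ ∀ u v w, F u w → F v w → u = v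

/-- `a` and `b` lie in the same weak component (same out-tree) of `F`. -/
def SameTree {V : Type*} (F : V → V → Prop) : V → V → Prop :=
  Relation.ReflTransGen (fun x y => F x y ∨ F y x)

/-- Degree of `v` in the underlying graph of `F` (out-arcs plus in-arcs). -/
noncomputable def udeg {V : Type*} (F : V → V → Prop) (v : V) : ℕ :=
  {w | F v w}.ncard + {w | F w v}.ncard

/-- A weak perfect out-forest of `D`: a spanning out-forest with all underlying degrees odd. -/
def WeakPerfect {V : Type*} (D F : V → V → Prop) : Prop :=
  Subd F D ∧ IsOutForest F ∧ ∀ v, Odd (udeg F v)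

/-- An almost perfect out-forest of `D`: weak perfect, and every arc of `D` not in `F`
goes between different out-trees or is a backward arc. -/
def AlmostPerfect {V : Type*} (D F : V → V → Prop) : Prop :=
  WeakPerfect D F ∧ ∀ u v, D u v → ¬ F u v →
    ¬ SameTree F u v ∨ Relation.TransGen F v u

/-- An even out-forest of `D`: a spanning out-forest all of whose out-trees have even order. -/
def EvenOutForest {V : Type*} (D F : V → V → Prop) : Prop :=
  Subd F D ∧ IsOutForest F ∧ ∀ v, Even ({w | SameTree F v w}.ncard)

/-- A perfect out-forest of `D`: a spanning out-forest with all underlying degrees odd,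
each of whose out-trees is an induced subdigraph of `D`. -/
def PerfectOutForest {V : Type*} (D F : V → V → Prop) : Prop :=
  Subd F D ∧ IsOutForest F ∧ (∀ v, Odd (udeg F v)) ∧
    ∀ a b, SameTree F a b → D a b → F a b

section Aux
open Relation Finset
variable {V : Type*} {T : V → V → Prop}

/-- In an out-forest, two ancestors of the same vertex are comparable. -/
lemma aux_comp (huniq : ∀ u v w, T u w → T v w → u = v)
    {a b w : V} (h1 : ReflTransGen T a w) (h2 : ReflTransGen T b w) :
    ReflTransGen T a b ∨ ReflTransGen T b a := by
  induction h1 generalizing b with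
  | refl => exact Or.inr h2
  | tail h1' hd ih =>
    rcases h2.cases_tail with rfl | ⟨e, h2', he⟩
    · exact Or.inl (h1'.tail hd)
    · exact ih (huniq e _ _ he hd ▸ h2')

/-- Weakly connected vertices in an out-forest have a common ancestor. -/
lemma aux_anc (huniq : ∀ u v w, T u w → T v w → u = v)
    {a b : V} (h : SameTree T a b) :
    ∃ c, ReflTransGen T c a ∧ ReflTransGen T c b := by
  induction h with
  | refl => exact ⟨a, .refl, .refl⟩
  | tail hab hbc ih =>
    obtain ⟨d, hda, hdb⟩ := ih
    rcases hbc with h | h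
    · exact ⟨d, hda, hdb.tail h⟩
    · rcases hdb.cases_tail with rfl | ⟨e, hde, heb⟩
      · exact ⟨_, (ReflTransGen.single h).trans hda, .refl⟩
      · exact ⟨d, hda, huniq e _ _ heb h ▸ hde⟩

end Aux

open Relation Finset in
/-- Every out-tree of even order contains a spanning weak perfect out-forest. -/
theorem stmt3 {V : Type*} [Fintype V] (T : V → V → Prop)
    (hT : IsOutForest T) (hconn : ∀ a b, SameTree T a b)
    (heven : Even (Fintype.card V)) :
    ∃ F, Subd F T ∧ IsOutForest F ∧ ∀ v, Odd (udeg F v) := by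
  classical
  obtain ⟨hirr, huniq⟩ := hT
  set sub : V → Finset V := fun x => univ.filter (fun w => ReflTransGen T x w) with hsub
  set s : V → ℕ := fun x => (sub x).card with hs
  set ch : V → Finset V := fun x => univ.filter (fun c => T x c) with hch
  have hmemsub : ∀ x w, w ∈ sub x ↔ ReflTransGen T x w := by simp [hsub]
  have hmemch : ∀ x c, c ∈ ch x ↔ T x c := by simp [hch]
  have hnoc : ∀ {x c}, T x c → ¬ ReflTransGen T c x := fun {x c} h h' =>
    hirr x (Relation.TransGen.head' h h')
  -- subtrees of distinct children are disjoint
  have hdisj : ∀ x, ∀ c1 ∈ ch x, ∀ c2 ∈ ch x, c1 ≠ c2 → Disjoint (sub c1) (sub c2) := by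
    intro x c1 hc1 c2 hc2 hne
    rw [Finset.disjoint_left]
    intro w hw1 hw2
    rw [hmemsub] at hw1 hw2
    rw [hmemch] at hc1 hc2
    rcases aux_comp huniq hw1 hw2 with h | h
    · rcases h.cases_tail with rfl | ⟨e, he, he2⟩
      · exact hne rfl
      · exact hnoc hc1 (huniq e _ _ he2 hc2 ▸ he)
    · rcases h.cases_tail with rfl | ⟨e, he, he2⟩
      · exact hne rfl
      · exact hnoc hc2 (huniq e _ _ he2 hc1 ▸ he)
  have hsubeq : ∀ x, sub x = insert x ((ch x).biUnion sub) := by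
    intro x
    ext w
    simp only [hmemsub, Finset.mem_insert, Finset.mem_biUnion, hmemch]
    constructor
    · intro h
      rcases h.cases_head with rfl | ⟨c, hc, hcw⟩
      · exact Or.inl rfl
      · exact Or.inr ⟨c, hc, hcw⟩
    · rintro (rfl | ⟨c, hc, hcw⟩)
      · exact .refl
      · exact ReflTransGen.head hc hcw
  have hxnot : ∀ x, x ∉ (ch x).biUnion sub := by
    intro x hx
    simp only [Finset.mem_biUnion, hmemch, hmemsub] at hx
    obtain ⟨c, hc, hcx⟩ := hx
    exact hnoc hc hcx
  have hcard : ∀ x, s x = 1 + ∑ c ∈ ch x, s c := by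
    intro x
    rw [hs]
    simp only
    rw [hsubeq x, Finset.card_insert_of_notMem (hxnot x),
      Finset.card_biUnion (hdisj x), Nat.add_comm]
  set k : V → ℕ := fun x => ((ch x).filter (fun c => Odd (s c))).card with hkdef
  have hk : ∀ x, Odd (s x) ↔ Even (k x) := by
    intro x
    rw [hcard x, Nat.add_comm, Nat.odd_add_one, Nat.not_odd_iff_even,
      Finset.even_sum_iff_even_card_odd]
  refine ⟨fun u v => T u v ∧ Odd (s v), fun u v h => h.1,
    ⟨fun x hx => hirr x (Relation.TransGen.mono (p := T) (fun a b (h : T a b ∧ Odd (s b)) => h.1) x x hx),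
     fun u v w h1 h2 => huniq u v w h1.1 h2.1⟩, ?_⟩
  intro x
  have hout : {w | T x w ∧ Odd (s w)}.ncard = k x := by
    have : {w | T x w ∧ Odd (s w)} = ↑((ch x).filter (fun c => Odd (s c))) := by
      ext w
      simp [hmemch]
    rw [this, Set.ncard_coe_finset]
  show Odd ({w | T x w ∧ Odd (s w)}.ncard + {w | T w x ∧ Odd (s x)}.ncard)
  by_cases hp : ∃ p, T p x
  · obtain ⟨p, hpx⟩ := hp
    by_cases hox : Odd (s x)
    · have hin : {w | T w x ∧ Odd (s x)} = {p} := by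
        ext w
        simp only [Set.mem_setOf_eq, Set.mem_singleton_iff]
        exact ⟨fun h => huniq w p x h.1 hpx, fun h => ⟨h ▸ hpx, hox⟩⟩
      rw [hout, hin, Set.ncard_singleton]
      exact ((hk x).1 hox).add_one
    · have hin : {w | T w x ∧ Odd (s x)} = ∅ := by
        ext w; simp [hox]
      rw [hout, hin, Set.ncard_empty, Nat.add_zero, Nat.odd_iff, ← Nat.not_even_iff]
      rw [Nat.not_odd_iff_even] at hox
      intro h
      exact (Nat.not_odd_iff_even.2 hox) ((hk x).2 h)
  · -- x is the root: it reaches everything, so s x = card V is even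
    have hreach : ∀ w, ReflTransGen T x w := by
      intro w
      obtain ⟨c, hcx, hcw⟩ := aux_anc huniq (hconn x w)
      rcases hcx.cases_tail with rfl | ⟨e, _, he2⟩
      · exact hcw
      · exact absurd ⟨e, he2⟩ hp
    have hsx : s x = Fintype.card V := by
      rw [hs]
      simp only
      rw [hsub]
      simp only
      rw [Finset.filter_true_of_mem (fun w _ => hreach w), Finset.card_univ]
    have hex : Even (s x) := hsx ▸ heven
    have hox : ¬ Odd (s x) := by rwa [Nat.not_odd_iff_even]
    have hin : {w | T w x ∧ Odd (s x)} = ∅ := by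
      ext w; simp [hox]
    rw [hout, hin, Set.ncard_empty, Nat.add_zero]
    rw [Nat.odd_iff, ← Nat.not_even_iff]
    intro h
    exact hox ((hk x).2 h)
end

section
/- If a digraph D with an even number of vertices contains an even out-forest, then D contains a weak perfect out-forest. -/
section Aux

open Relation
open scoped Classical

variable {V : Type*}

private lemma sameTree_symm' {F : V → V → Prop} {x y : V} (h : SameTree F x y) :
    SameTree F y x := by
  induction h with
  | refl => exact ReflTransGen.refl
  | @tail b c _ hstep ih =>
      exact (ReflTransGen.single (r := fun p q => F p q ∨ F q p) hstep.symm).trans ih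

private lemma natCast_even_zmod2 {n : ℕ} (h : Even n) : ((n : ℕ) : ZMod 2) = 0 := by
  obtain ⟨k, rfl⟩ := h
  push_cast
  exact CharTwo.add_self_eq_zero _

private lemma key_parity [Fintype V] :
    ∀ (n : ℕ) (F : V → V → Prop), {p : V × V | F p.1 p.2}.ncard ≤ n →
      IsOutForest F → ∀ (t : V → ZMod 2),
      (∀ v, ∑ w ∈ {w | SameTree F v w}.toFinset, t w = 0) →
      ∃ S : V → V → Prop, Subd S F ∧ ∀ v, ((udeg S v : ℕ) : ZMod 2) = t v := by
  have hempty : ∀ (F : V → V → Prop), (∀ a b, ¬ F a b) → ∀ (t : V → ZMod 2),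
      (∀ v, ∑ w ∈ {w | SameTree F v w}.toFinset, t w = 0) →
      ∃ S : V → V → Prop, Subd S F ∧ ∀ v, ((udeg S v : ℕ) : ZMod 2) = t v := by
    intro F hF t ht
    refine ⟨fun _ _ => False, fun a b h => h.elim, fun v => ?_⟩
    have hcomp : {w | SameTree F v w}.toFinset = {v} := by
      ext y
      simp only [Set.mem_toFinset, Set.mem_setOf_eq, Finset.mem_singleton]
      constructor
      · intro h
        rcases h.cases_head with h | ⟨c, hc, _⟩
        · exact h.symm
        · rcases hc with hc | hc <;> exact absurd hc (hF _ _)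
      · rintro rfl; exact ReflTransGen.refl
    have hts := ht v
    rw [hcomp, Finset.sum_singleton] at hts
    have hud : udeg (fun _ _ => False) v = 0 := by
      simp [udeg]
    simp only [hud, Nat.cast_zero]
    exact hts.symm
  intro n
  induction n with
  | zero =>
      intro F hcard hF t ht
      apply hempty F _ t ht
      intro a b hab
      have hmem : ((a, b) : V × V) ∈ {p : V × V | F p.1 p.2} := hab
      have h0 : {p : V × V | F p.1 p.2}.ncard = 0 := Nat.le_zero.mp hcard
      rw [Set.ncard_eq_zero (Set.toFinite _)] at h0
      rw [h0] at hmem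
      exact hmem
  | succ n ih =>
      intro F hcard hF t ht
      by_cases hE : ∀ a b, ¬ F a b
      · exact hempty F hE t ht
      push_neg at hE
      obtain ⟨a, b, hab⟩ := hE
      -- find a "leaf" v : no out-arcs, a unique in-arc from u
      have hwf : WellFounded (fun x y : V => Relation.TransGen F y x) := by
        haveI : IsTrans V (fun x y : V => Relation.TransGen F y x) :=
          ⟨fun a b c h1 h2 => h2.trans h1⟩
        haveI : IsIrrefl V (fun x y : V => Relation.TransGen F y x) :=
          ⟨fun a h => hF.1 a h⟩
        exact Finite.wellFounded_of_trans_of_irrefl _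
      obtain ⟨v, hvR, hvmin⟩ := hwf.has_min {w | Relation.ReflTransGen F a w}
        ⟨b, ReflTransGen.single hab⟩
      have hvout : ∀ w, ¬ F v w := fun w hw =>
        hvmin w (hvR.tail hw) (TransGen.single hw)
      have hva : v ≠ a := fun h => hvout b (h ▸ hab)
      obtain ⟨u, hu⟩ : ∃ u, F u v := by
        rcases Relation.ReflTransGen.cases_tail hvR with h | ⟨c, _, hc⟩
        · exact absurd h hva
        · exact ⟨c, hc⟩
      have huniq : ∀ w, F w v → w = u := fun w hw => hF.2 w u v hw hu
      have huv : u ≠ v := by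
        intro h; exact hF.1 v (TransGen.single (h ▸ hu))
      -- remove the arc (u, v)
      set F' : V → V → Prop := fun x y => F x y ∧ ¬ (x = u ∧ y = v) with hF'def
      have hF'forest : IsOutForest F' := by
        constructor
        · intro x hx
          exact hF.1 x (TransGen.mono (fun a b h => h.1) _ _ hx)
        · intro x y w h1 h2
          exact hF.2 x y w h1.1 h2.1
      have hF'card : {p : V × V | F' p.1 p.2}.ncard ≤ n := by
        have hss : {p : V × V | F' p.1 p.2} ⊂ {p : V × V | F p.1 p.2} := by
          constructor
          · exact fun p hp => hp.1
          · intro hsub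
            have hmem : ((u, v) : V × V) ∈ {p : V × V | F p.1 p.2} := hu
            have h2 : F' u v := hsub hmem
            exact h2.2 ⟨rfl, rfl⟩
        have := Set.ncard_lt_ncard hss (Set.toFinite _)
        omega
      have hv'out : ∀ w, ¬ F' v w := fun w hw => hvout w hw.1
      have hv'in : ∀ w, ¬ F' w v := fun w hw => hw.2 ⟨huniq w hw.1, rfl⟩
      -- v is isolated in F'
      have hC : ∀ y, SameTree F' v y → y = v := by
        intro y h
        rcases h.cases_head with h | ⟨c, hc, _⟩
        · exact h.symm
        · rcases hc with hc | hc
          · exact absurd hc (hv'out c)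
          · exact absurd hc (hv'in c)
      have hB : ∀ x y, SameTree F' x y → SameTree F x y := by
        intro x y h
        refine ReflTransGen.mono ?_ _ _ h
        rintro p q (h | h)
        · exact Or.inl h.1
        · exact Or.inr h.1
      have hA : ∀ x y, x ≠ v → y ≠ v → SameTree F x y → SameTree F' x y := by
        intro x y hx hy h
        have hg : ∀ {p q : V}, SameTree F p q →
            SameTree F' (if p = v then u else p) (if q = v then u else q) := by
          intro p q h
          induction h with
          | refl => exact ReflTransGen.refl
          | @tail b c hpb hstep ih =>
              refine ih.trans ?_
              by_cases hb : b = v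
              · subst hb
                rcases hstep with hs | hs
                · exact absurd hs (hvout c)
                · have hcu : c = u := huniq c hs
                  rw [hcu]
                  simpa [huv] using (ReflTransGen.refl : SameTree F' u u)
              · by_cases hc : c = v
                · subst hc
                  rcases hstep with hs | hs
                  · have hbu : b = u := huniq b hs
                    rw [hbu]
                    simpa [huv] using (ReflTransGen.refl : SameTree F' u u)
                  · exact absurd hs (hvout b)
                · simp only [if_neg hb, if_neg hc]
                  rcases hstep with hs | hs
                  · exact ReflTransGen.single (Or.inl ⟨hs, fun h => hc h.2⟩)
                  · exact ReflTransGen.single (Or.inr ⟨hs, fun h => hb h.2⟩)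
        have hres := hg h
        rwa [if_neg hx, if_neg hy] at hres
      have hcompv : {w | SameTree F' v w}.toFinset = {v} := by
        ext y
        simp only [Set.mem_toFinset, Set.mem_setOf_eq, Finset.mem_singleton]
        exact ⟨hC y, by rintro rfl; exact ReflTransGen.refl⟩
      have hcomp : ∀ x, x ≠ v → {w | SameTree F' x w}.toFinset
          = {w | SameTree F x w}.toFinset.erase v := by
        intro x hx
        ext y
        simp only [Set.mem_toFinset, Set.mem_setOf_eq, Finset.mem_erase]
        constructor
        · intro h
          refine ⟨?_, hB x y h⟩
          rintro rfl
          exact hx (hC x (sameTree_symm' h))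
        · rintro ⟨hy, h⟩
          exact hA x y hx hy h
      set t' : V → ZMod 2 := fun x =>
        t x + (if x = u then t v else 0) + (if x = v then t v else 0) with ht'def
      have ht'v : t' v = 0 := by
        have hv2 : t' v = t v + t v := by simp [ht'def, Ne.symm huv]
        rw [hv2, CharTwo.add_self_eq_zero]
      have hucomp : ∀ x, SameTree F x v ↔ SameTree F x u := by
        intro x
        constructor
        · intro h; exact h.trans (ReflTransGen.single (Or.inr hu))
        · intro h; exact h.trans (ReflTransGen.single (Or.inl hu))
      have ht' : ∀ x, ∑ w ∈ {w | SameTree F' x w}.toFinset, t' w = 0 := by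
        intro x
        by_cases hx : x = v
        · subst hx
          rw [hcompv, Finset.sum_singleton]
          exact ht'v
        · rw [hcomp x hx]
          have hsum : ∀ s : Finset V, ∑ w ∈ s, t' w =
              (∑ w ∈ s, t w) + (if u ∈ s then t v else 0) + (if v ∈ s then t v else 0) := by
            intro s
            simp only [ht'def]
            rw [Finset.sum_add_distrib, Finset.sum_add_distrib,
              Finset.sum_ite_eq' s u (fun _ => t v), Finset.sum_ite_eq' s v (fun _ => t v)]
          have hers : ∑ w ∈ {w | SameTree F x w}.toFinset.erase v, t' w
              = ∑ w ∈ {w | SameTree F x w}.toFinset, t' w := Finset.sum_erase _ ht'v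
          rw [hers, hsum]
          by_cases hv : SameTree F x v
          · have hvmem : v ∈ {w | SameTree F x w}.toFinset := by
              simp only [Set.mem_toFinset, Set.mem_setOf_eq]; exact hv
            have humem : u ∈ {w | SameTree F x w}.toFinset := by
              simp only [Set.mem_toFinset, Set.mem_setOf_eq]; exact (hucomp x).mp hv
            rw [ht x, zero_add]
            simp only [humem, hvmem, if_true]
            exact CharTwo.add_self_eq_zero _
          · have hvmem : v ∉ {w | SameTree F x w}.toFinset := by
              simp only [Set.mem_toFinset, Set.mem_setOf_eq]; exact hv
            have humem : u ∉ {w | SameTree F x w}.toFinset := by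
              simp only [Set.mem_toFinset, Set.mem_setOf_eq]
              exact fun h => hv ((hucomp x).mpr h)
            rw [ht x, zero_add]
            simp only [Set.mem_toFinset, Set.mem_setOf_eq]
            rw [if_neg (fun hsu => hv ((hucomp x).mpr hsu)), if_neg hv, add_zero]
      obtain ⟨S, hSsub, hSpar⟩ := ih F' hF'card hF'forest t' ht'
      have hSv_out : {w | S v w} = ∅ := by
        ext w
        simp only [Set.mem_setOf_eq, Set.mem_empty_iff_false, iff_false]
        exact fun h => hv'out w (hSsub h)
      have hSv_in : {w | S w v} = ∅ := by
        ext w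
        simp only [Set.mem_setOf_eq, Set.mem_empty_iff_false, iff_false]
        exact fun h => hv'in w (hSsub h)
      by_cases htv : t v = 0
      · refine ⟨S, fun x y h => (hSsub h).1, fun x => ?_⟩
        rw [hSpar x]
        simp [ht'def, htv]
      · have htv1 : t v = 1 := by
          have hall : ∀ a : ZMod 2, a = 0 ∨ a = 1 := by decide
          rcases hall (t v) with h | h
          · exact absurd h htv
          · exact h
        have h11 : (1 : ZMod 2) + 1 = 0 := by decide
        refine ⟨fun x y => S x y ∨ (x = u ∧ y = v), ?_, ?_⟩
        · rintro x y (h | ⟨rfl, rfl⟩)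
          · exact (hSsub h).1
          · exact hu
        · intro x
          show ((({w | S x w ∨ (x = u ∧ w = v)}.ncard +
            {w | S w x ∨ (w = u ∧ x = v)}.ncard : ℕ)) : ZMod 2) = t x
          by_cases hxu : x = u
          · rw [hxu]
            have h1 : {w | S u w ∨ (u = u ∧ w = v)} = insert v {w | S u w} := by
              ext w
              simp only [Set.mem_setOf_eq, Set.mem_insert_iff, true_and]
              tauto
            have h2 : {w | S w u ∨ (w = u ∧ u = v)} = {w | S w u} := by
              ext w
              simp only [Set.mem_setOf_eq]
              exact ⟨fun h => h.elim id (fun h => absurd h.2 huv), Or.inl⟩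
            have hvnot : v ∉ {w | S u w} := by
              intro h
              exact hv'in u (hSsub h)
            rw [h1, h2, Set.ncard_insert_of_notMem hvnot (Set.toFinite _)]
            have hpu := hSpar u
            have hud : udeg S u = {w | S u w}.ncard + {w | S w u}.ncard := rfl
            rw [hud] at hpu
            have harr : ({w | S u w}.ncard + 1 + {w | S w u}.ncard : ℕ)
                = ({w | S u w}.ncard + {w | S w u}.ncard) + 1 := by ring
            rw [harr]
            push_cast
            push_cast at hpu
            rw [hpu]
            have ht'u : t' u = t u + 1 := by
              simp [ht'def, huv, htv1]
            rw [ht'u, add_assoc, h11, add_zero]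
          · by_cases hxv : x = v
            · rw [hxv]
              have h1 : {w | S v w ∨ (v = u ∧ w = v)} = ∅ := by
                ext w
                simp only [Set.mem_setOf_eq, Set.mem_empty_iff_false, iff_false]
                rintro (h | ⟨h, _⟩)
                · exact hv'out w (hSsub h)
                · exact Ne.symm huv h
              have h2 : {w | S w v ∨ (w = u ∧ v = v)} = {u} := by
                ext w
                simp only [Set.mem_setOf_eq, Set.mem_singleton_iff, and_true]
                constructor
                · rintro (h | h)
                  · exact absurd (hSsub h) (hv'in w)
                  · exact h
                · exact Or.inr
              rw [h1, h2, Set.ncard_empty, Set.ncard_singleton, htv1]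
              norm_num
            · have h1 : {w | S x w ∨ (x = u ∧ w = v)} = {w | S x w} := by
                ext w
                simp only [Set.mem_setOf_eq]
                exact ⟨fun h => h.elim id (fun h => absurd h.1 hxu), Or.inl⟩
              have h2 : {w | S w x ∨ (w = u ∧ x = v)} = {w | S w x} := by
                ext w
                simp only [Set.mem_setOf_eq]
                exact ⟨fun h => h.elim id (fun h => absurd h.2 hxv), Or.inl⟩
              rw [h1, h2]
              have hpx := hSpar x
              have hud : udeg S x = {w | S x w}.ncard + {w | S w x}.ncard := rfl
              rw [hud] at hpx
              rw [hpx]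
              simp [ht'def, hxu, hxv]

end Aux

/-- If a digraph of even order contains an even out-forest, then it contains a
weak perfect out-forest. -/
theorem stmt4 {V : Type*} [Fintype V] (D : V → V → Prop)
    (heven : Even (Fintype.card V)) (h : ∃ F, EvenOutForest D F) :
    ∃ F, WeakPerfect D F := by
  classical
  obtain ⟨F, hFD, hFforest, hFev⟩ := h
  have hcompsum : ∀ v, ∑ w ∈ {w | SameTree F v w}.toFinset, (fun _ => (1 : ZMod 2)) w = 0 := by
    intro v
    rw [Finset.sum_const, nsmul_eq_mul, mul_one]
    have hcard : ({w | SameTree F v w}.toFinset.card : ℕ) = {w | SameTree F v w}.ncard :=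
      (Set.ncard_eq_toFinset_card' _).symm
    rw [hcard]
    exact natCast_even_zmod2 (hFev v)
  obtain ⟨S, hSsub, hSpar⟩ := key_parity {p : V × V | F p.1 p.2}.ncard F le_rfl hFforest
    (fun _ => 1) hcompsum
  refine ⟨S, fun a b hab => hFD (hSsub hab), ⟨?_, ?_⟩, ?_⟩
  · intro x hx
    exact hFforest.1 x (Relation.TransGen.mono (fun a b hab => hSsub hab) _ _ hx)
  · intro x y w h1 h2
    exact hFforest.2 x y w (hSsub h1) (hSsub h2)
  · intro v
    have hp := hSpar v
    rcases Nat.even_or_odd (udeg S v) with he | ho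
    · rw [natCast_even_zmod2 he] at hp
      exact absurd hp (by decide)
    · exact ho
end

section
/- Let F be a weak perfect out-forest of a digraph D, let T be an out-tree of F, and suppose uv is an arc of D not in T with u and v both in T such that uv is a forward or cross arc of T. Let P be the unique path from u to v in the underlying graph of T, and let F_T be obtained from T by adding the arc uv and deleting all arcs of T corresponding to edges of P. Then F_T is a weak perfect out-forest of D[V(T)] with fewer arcs than T. -/
/-- The (directed) edge `ab` of the out-tree `T` lies on the unique path between
`u` and `v` in the underlying tree of `T`: removing it disconnects `u` from `v`. -/
def onPath {V : Type*} (T : V → V → Prop) (u v a b : V) : Prop :=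
  T a b ∧ ¬ SameTree (fun p q => T p q ∧ ¬(p = a ∧ q = b)) u v

open Relation

section Aux
variable {V : Type*} {T : V → V → Prop}

/-- ancestors of a vertex are comparable -/
lemma anc_comp (hu : ∀ a b c, T a c → T b c → a = b) {b c : V}
    (h : ReflTransGen T b c) : ∀ a, ReflTransGen T a c → ReflTransGen T a b ∨ ReflTransGen T b a := by
  induction h using ReflTransGen.head_induction_on with
  | refl => exact fun a ha => Or.inl ha
  | head hbd hdc ih =>
    rename_i b' d
    intro a hac
    rcases ih a hac with had | hda
    · rcases had.cases_tail with rfl | ⟨e, hae, hed⟩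
      · exact Or.inr (ReflTransGen.single hbd)
      · exact Or.inl (hu _ _ _ hed hbd ▸ hae)
    · exact Or.inr ((ReflTransGen.single hbd).trans hda)

/-- common ancestor exists -/
lemma common_anc (hu : ∀ a b c, T a c → T b c → a = b) {x y : V}
    (h : ReflTransGen (fun p q => T p q ∨ T q p) x y) :
    ∃ w, ReflTransGen T w x ∧ ReflTransGen T w y := by
  induction h with
  | refl => exact ⟨x, .refl, .refl⟩
  | tail hrec step ih =>
    rename_i mid m
    obtain ⟨w, hwx, hwm⟩ := ih
    rcases step with hmy | hym
    · exact ⟨w, hwx, hwm.tail hmy⟩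
    · rcases hwm.cases_tail with rfl | ⟨e, hwe, hem⟩
      · exact ⟨m, (ReflTransGen.single hym).trans hwx, .refl⟩
      · exact ⟨w, hwx, hu _ _ _ hem hym ▸ hwe⟩

lemma child_unique (hu : ∀ a b c, T a c → T b c → a = b)
    (hi : Irreflexive (TransGen T)) {x w w' z : V}
    (h1 : T x w) (h2 : T x w') (h3 : ReflTransGen T w z) (h4 : ReflTransGen T w' z) : w = w' := by
  have key : ∀ p q : V, T x p → T x q → ReflTransGen T p q → p = q := by
    intro p q hp hq hpq
    rcases hpq.cases_tail with rfl | ⟨e, hpe, heq⟩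
    · rfl
    · obtain rfl : e = x := hu _ _ _ heq hq
      exact (hi p (TransGen.tail' hpe hp)).elim
  rcases anc_comp hu h3 _ h4 with h | h
  · exact (key _ _ h2 h1 h).symm
  · exact key _ _ h1 h2 h

/-- a descendant path avoids any removed arc ending at its start -/
lemma rtg_avoid_start (hi : Irreflexive (TransGen T)) {a0 b y : V}
    (h : ReflTransGen T b y) :
    ReflTransGen (fun p q => T p q ∧ ¬(p = a0 ∧ q = b)) b y := by
  induction h with
  | tail hbm hmy ih =>
    refine ReflTransGen.tail ih ⟨hmy, ?_⟩
    rintro ⟨rfl, rfl⟩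
    exact hi _ (TransGen.tail' hbm hmy)
  | refl => exact .refl

/-- a path avoiding the subtree of `b0` avoids any arc into `b0` -/
lemma rtg_avoid (a0 b0 : V) {w z : V} (hz : ¬ ReflTransGen T b0 z)
    (h : ReflTransGen T w z) :
    ReflTransGen (fun p q => T p q ∧ ¬(p = a0 ∧ q = b0)) w z := by
  induction h with
  | tail hwm hmz ih =>
    rename_i m mfin
    have hm : ¬ ReflTransGen T b0 m := fun h' => hz (h'.tail hmz)
    refine ReflTransGen.tail (ih hm) ⟨hmz, ?_⟩
    rintro ⟨rfl, rfl⟩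
    exact hz .refl
  | refl => exact .refl
end Aux

section Aux2
variable {V : Type*} {T : V → V → Prop}

lemma rtg_sym_rev {R : V → V → Prop} {x y : V} (h : ReflTransGen R x y) :
    ReflTransGen (fun p q => R p q ∨ R q p) y x := by
  induction h with
  | refl => exact .refl
  | tail _ step ih => exact ReflTransGen.head (Or.inr step) ih

lemma rtg_sym_of {R : V → V → Prop} (hR : ∀ ⦃p q⦄, T p q → R p q) {x y : V} (h : ReflTransGen T x y) :
    ReflTransGen (fun p q => R p q ∨ R q p) x y :=
  ReflTransGen.mono (p := fun p q => R p q ∨ R q p) (fun _ _ hpq => Or.inl (hR hpq)) x y h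

lemma has_parent (hu : ∀ a b c, T a c → T b c → a = b) {x z : V}
    (hconn : ReflTransGen (fun p q => T p q ∨ T q p) x z)
    (hx : ¬ ReflTransGen T x z) : ∃ p, T p x := by
  obtain ⟨w, hwx, hwz⟩ := common_anc hu hconn
  rcases hwx.cases_tail with rfl | ⟨e, _, hex⟩
  · exact (hx hwz).elim
  · exact ⟨e, hex⟩

lemma onPath_char (hu : ∀ a b c, T a c → T b c → a = b)
    (hi : Irreflexive (TransGen T)) {u v a b : V}
    (hconn : ReflTransGen (fun p q => T p q ∨ T q p) u v) :
    (T a b ∧ ¬ ReflTransGen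
        (fun x y => (T x y ∧ ¬(x = a ∧ y = b)) ∨ (T y x ∧ ¬(y = a ∧ x = b))) u v)
      ↔ T a b ∧ ¬(ReflTransGen T b u ↔ ReflTransGen T b v) := by
  set T' : V → V → Prop := fun x y => T x y ∧ ¬(x = a ∧ y = b) with hT'
  constructor
  · rintro ⟨hab, hdis⟩
    refine ⟨hab, fun hiff => hdis ?_⟩
    by_cases hbu : ReflTransGen T b u
    · have hbv : ReflTransGen T b v := hiff.mp hbu
      have h1 : ReflTransGen T' b u := rtg_avoid_start hi hbu
      have h2 : ReflTransGen T' b v := rtg_avoid_start hi hbv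
      exact (rtg_sym_rev h1).trans (rtg_sym_of (T := T') (fun _ _ h => h) h2)
    · have hbv : ¬ ReflTransGen T b v := fun h => hbu (hiff.mpr h)
      obtain ⟨w, hwu, hwv⟩ := common_anc hu hconn
      have h1 : ReflTransGen T' w u := rtg_avoid a b hbu hwu
      have h2 : ReflTransGen T' w v := rtg_avoid a b hbv hwv
      exact (rtg_sym_rev h1).trans (rtg_sym_of (T := T') (fun _ _ h => h) h2)
  · rintro ⟨hab, hxor⟩
    refine ⟨hab, fun hcon => hxor ?_⟩
    have step : ∀ p q, (T' p q ∨ T' q p) → (ReflTransGen T b p ↔ ReflTransGen T b q) := by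
      have key : ∀ p q, T' p q → (ReflTransGen T b p ↔ ReflTransGen T b q) := by
        rintro p q ⟨hpq, hne⟩
        constructor
        · exact fun h => h.tail hpq
        · intro h
          rcases h.cases_tail with rfl | ⟨e, hbe, heq⟩
          · exact absurd ⟨hu _ _ _ hpq hab, rfl⟩ hne
          · exact (hu _ _ _ heq hpq) ▸ hbe
      rintro p q (h | h)
      · exact key p q h
      · exact (key q p h).symm
    have main : ∀ z, ReflTransGen (fun x y => T' x y ∨ T' y x) u z →
        (ReflTransGen T b u ↔ ReflTransGen T b z) := by
      intro z hz
      induction hz with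
      | refl => exact Iff.rfl
      | tail _ s ih => exact ih.trans (step _ _ s)
    exact main v hcon
end Aux2


/-- Replacing, in an out-tree `T` (with all underlying degrees odd) of a weak
perfect out-forest of `D`, the arcs of the unique underlying path from `u` to `v`
by a forward or cross arc `uv` of `D`, yields a weak perfect out-forest of
`D[V(T)]` with fewer arcs than `T`. -/
theorem stmt8 {V : Type*} [Fintype V] (D T : V → V → Prop) (u v : V)
    (hT : IsOutForest T) (hconn : ∀ a b, SameTree T a b)
    (hsub : Subd T D) (hodd : ∀ x, Odd (udeg T x))
    (harc : D u v) (hnotT : ¬ T u v) (hne : u ≠ v)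
    (hnotback : ¬ Relation.TransGen T v u) :
    IsOutForest (fun x y => (x = u ∧ y = v) ∨ (T x y ∧ ¬ onPath T u v x y)) ∧
    Subd (fun x y => (x = u ∧ y = v) ∨ (T x y ∧ ¬ onPath T u v x y)) D ∧
    (∀ x, Odd (udeg (fun x y => (x = u ∧ y = v) ∨ (T x y ∧ ¬ onPath T u v x y)) x)) ∧
    {p : V × V | (p.1 = u ∧ p.2 = v) ∨ (T p.1 p.2 ∧ ¬ onPath T u v p.1 p.2)}.ncard
      < {p : V × V | T p.1 p.2}.ncard := by
  classical
  obtain ⟨hi, huniq⟩ := hT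
  set F : V → V → Prop := fun x y => (x = u ∧ y = v) ∨ (T x y ∧ ¬ onPath T u v x y) with hF
  have hchar : ∀ a b : V, onPath T u v a b ↔
      (T a b ∧ ¬(ReflTransGen T b u ↔ ReflTransGen T b v)) :=
    fun a b => onPath_char huniq hi (hconn u v)
  have hnrvu : ¬ ReflTransGen T v u := by
    rw [reflTransGen_iff_eq_or_transGen]
    rintro (h | h)
    · exact hne h
    · exact hnotback h
  -- every in-arc of v is on the path
  have hpathv : ∀ b, T b v → onPath T u v b v := by
    intro b hb
    exact (hchar b v).mpr ⟨hb, fun hiff => hnrvu (hiff.mpr .refl)⟩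
  -- structure of TransGen F
  have claim : ∀ x y, TransGen F x y →
      TransGen T x y ∨ (ReflTransGen T x u ∧ ReflTransGen T v y) := by
    intro x y h
    induction h with
    | single h =>
      rcases h with ⟨rfl, rfl⟩ | ⟨h, -⟩
      · exact Or.inr ⟨.refl, .refl⟩
      · exact Or.inl (.single h)
    | tail hrec step ih =>
      rcases step with ⟨rfl, rfl⟩ | ⟨hs, -⟩
      · rcases ih with h1 | ⟨h2, h3⟩
        · exact Or.inr ⟨h1.to_reflTransGen, .refl⟩
        · exact (hnrvu h3).elim
      · rcases ih with h1 | ⟨h2, h3⟩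
        · exact Or.inl (h1.tail hs)
        · exact Or.inr ⟨h2, h3.tail hs⟩
  have hForest : IsOutForest F := by
    constructor
    · intro x hx
      rcases claim x x hx with h | ⟨h2, h3⟩
      · exact hi x h
      · exact hnrvu (h3.trans h2)
    · intro a b w ha hb
      rcases ha with ⟨rfl, rfl⟩ | ⟨ha', hnpa⟩
      · rcases hb with ⟨rfl, -⟩ | ⟨hb', hnpb⟩
        · rfl
        · exact (hnpb (hpathv b hb')).elim
      · rcases hb with ⟨rfl, rfl⟩ | ⟨hb', hnpb⟩
        · exact (hnpa (hpathv a ha')).elim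
        · exact huniq _ _ _ ha' hb'
  have hSubd : Subd F D := by
    rintro a b (⟨rfl, rfl⟩ | ⟨h, -⟩)
    · exact harc
    · exact hsub h
  -- degrees
  have hodds : ∀ x, Odd (udeg F x) := by
    intro x
    set A := {w | T x w} with hA
    set S := {w | T x w ∧ ¬(ReflTransGen T w u ↔ ReflTransGen T w v)} with hS
    set B := {w | T w x} with hB
    set R := {w | T w x ∧ ¬(ReflTransGen T x u ↔ ReflTransGen T x v)} with hR
    have hSA : S ⊆ A := fun w hw => hw.1
    have hRB : R ⊆ B := fun w hw => hw.1
    have hdiffS : (A \ S).ncard = A.ncard - S.ncard := Set.ncard_diff hSA (Set.toFinite _)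
    have hdiffR : (B \ R).ncard = B.ncard - R.ncard := Set.ncard_diff hRB (Set.toFinite _)
    have hleS : S.ncard ≤ A.ncard := Set.ncard_le_ncard hSA (Set.toFinite A)
    have hleR : R.ncard ≤ B.ncard := Set.ncard_le_ncard hRB (Set.toFinite B)
    have hout : {w | F x w}.ncard + S.ncard = A.ncard + (if x = u then 1 else 0) := by
      by_cases hxu : x = u
      · subst hxu
        have he : {w | F x w} = insert v (A \ S) := by
          ext w
          constructor
          · rintro (⟨-, rfl⟩ | ⟨h1, h2⟩)
            · exact Set.mem_insert _ _
            · exact Set.mem_insert_of_mem _ ⟨h1, fun hw => h2 ((hchar x w).mpr hw)⟩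
          · rintro (rfl | ⟨h1, h2⟩)
            · exact Or.inl ⟨rfl, rfl⟩
            · exact Or.inr ⟨h1, fun hp => h2 ⟨h1, ((hchar x w).mp hp).2⟩⟩
        have hv : v ∉ A \ S := fun hv' => hnotT hv'.1
        rw [he, Set.ncard_insert_of_notMem hv (Set.toFinite _), hdiffS, if_pos rfl]
        omega
      · have he : {w | F x w} = A \ S := by
          ext w
          constructor
          · rintro (⟨rfl, -⟩ | ⟨h1, h2⟩)
            · exact (hxu rfl).elim
            · exact ⟨h1, fun hw => h2 ((hchar x w).mpr hw)⟩
          · rintro ⟨h1, h2⟩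
            exact Or.inr ⟨h1, fun hp => h2 ⟨h1, ((hchar x w).mp hp).2⟩⟩
        rw [he, hdiffS, if_neg hxu]
        omega
    have hin : {w | F w x}.ncard + R.ncard = B.ncard + (if x = v then 1 else 0) := by
      by_cases hxv : x = v
      · subst hxv
        have he : {w | F w x} = insert u (B \ R) := by
          ext w
          constructor
          · rintro (⟨rfl, -⟩ | ⟨h1, h2⟩)
            · exact Set.mem_insert _ _
            · exact Set.mem_insert_of_mem _ ⟨h1, fun hw => h2 ((hchar w x).mpr ⟨h1, hw.2⟩)⟩
          · rintro (rfl | ⟨h1, h2⟩)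
            · exact Or.inl ⟨rfl, rfl⟩
            · exact Or.inr ⟨h1, fun hp => h2 ⟨h1, ((hchar w x).mp hp).2⟩⟩
        have hu' : u ∉ B \ R := fun hu'' => hnotT hu''.1
        rw [he, Set.ncard_insert_of_notMem hu' (Set.toFinite _), hdiffR, if_pos rfl]
        omega
      · have he : {w | F w x} = B \ R := by
          ext w
          constructor
          · rintro (⟨-, rfl⟩ | ⟨h1, h2⟩)
            · exact (hxv rfl).elim
            · exact ⟨h1, fun hw => h2 ((hchar w x).mpr ⟨h1, hw.2⟩)⟩
          · rintro ⟨h1, h2⟩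
            exact Or.inr ⟨h1, fun hp => h2 ⟨h1, ((hchar w x).mp hp).2⟩⟩
        rw [he, hdiffR, if_neg hxv]
        omega
    -- R cardinality helpers
    have hRone : ¬(ReflTransGen T x u ↔ ReflTransGen T x v) → R.ncard = 1 := by
      intro hc
      have hz : ∃ p, T p x := by
        by_cases hxu' : ReflTransGen T x u
        · have hxv' : ¬ ReflTransGen T x v := fun h => hc ⟨fun _ => h, fun _ => hxu'⟩
          exact has_parent huniq (hconn x v) hxv'
        · exact has_parent huniq (hconn x u) hxu'
      obtain ⟨p, hp⟩ := hz
      have : R = {p} := by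
        ext w
        simp only [hR, Set.mem_setOf_eq, Set.mem_singleton_iff]
        constructor
        · rintro ⟨hw, -⟩
          exact huniq _ _ _ hw hp
        · rintro rfl
          exact ⟨hp, hc⟩
      rw [this, Set.ncard_singleton]
    have hRzero : (ReflTransGen T x u ↔ ReflTransGen T x v) → R.ncard = 0 := by
      intro hc
      have : R = ∅ := Set.eq_empty_iff_forall_notMem.mpr fun w hw => hw.2 hc
      rw [this, Set.ncard_empty]
    have heven : Even (S.ncard + R.ncard + (if x = u then 1 else 0) + (if x = v then 1 else 0)) := by
      by_cases hxu : x = u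
      · subst hxu
        rw [if_pos rfl, if_neg hne]
        have hnwu : ∀ w, T x w → ¬ ReflTransGen T w x :=
          fun w h1 h2 => hi x (TransGen.head' h1 h2)
        by_cases htv : TransGen T x v
        · obtain ⟨c, hxc, hcv⟩ := TransGen.head'_iff.mp htv
          have hSc : S = {c} := by
            ext w
            simp only [hS, Set.mem_setOf_eq, Set.mem_singleton_iff]
            constructor
            · rintro ⟨h1, h2⟩
              have hwv : ReflTransGen T w v := by
                by_contra hwv
                exact h2 ⟨fun h => (hnwu w h1 h).elim, fun h => (hwv h).elim⟩
              exact child_unique huniq hi h1 hxc hwv hcv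
            · rintro rfl
              exact ⟨hxc, fun hiff => hnwu _ hxc (hiff.mpr hcv)⟩
          have hr : R.ncard = 0 := hRzero ⟨fun _ => htv.to_reflTransGen, fun _ => .refl⟩
          rw [hSc, Set.ncard_singleton, hr]
          exact ⟨1, rfl⟩
        · have hS0 : S = ∅ := by
            refine Set.eq_empty_iff_forall_notMem.mpr fun w hw => ?_
            obtain ⟨h1, h2⟩ := hw
            refine h2 ⟨fun h => (hnwu w h1 h).elim, fun h => ?_⟩
            exact (htv (TransGen.head' h1 h)).elim
          have hxv' : ¬ ReflTransGen T x v := by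
            rw [reflTransGen_iff_eq_or_transGen]
            rintro (h | h)
            · exact hne h.symm
            · exact htv h
          have hr : R.ncard = 1 := hRone (fun hiff => hxv' (hiff.mp .refl))
          rw [hS0, Set.ncard_empty, hr]
          exact ⟨1, rfl⟩
      · by_cases hxv : x = v
        · subst hxv
          rw [if_neg hxu, if_pos rfl]
          have hS0 : S = ∅ := by
            refine Set.eq_empty_iff_forall_notMem.mpr fun w hw => ?_
            obtain ⟨h1, h2⟩ := hw
            refine h2 ⟨fun h => ?_, fun h => ?_⟩
            · exact (hnotback (TransGen.head' h1 h)).elim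
            · exact (hi x (TransGen.head' h1 h)).elim
          have hr : R.ncard = 1 := hRone (fun hiff => hnrvu (hiff.mpr .refl))
          rw [hS0, Set.ncard_empty, hr]
          exact ⟨1, rfl⟩
        · rw [if_neg hxu, if_neg hxv]
          have hru : ReflTransGen T x u ↔ TransGen T x u := by
            rw [reflTransGen_iff_eq_or_transGen]
            exact ⟨fun h => h.resolve_left fun h' => hxu h'.symm, Or.inr⟩
          have hrv : ReflTransGen T x v ↔ TransGen T x v := by
            rw [reflTransGen_iff_eq_or_transGen]
            exact ⟨fun h => h.resolve_left fun h' => hxv h'.symm, Or.inr⟩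
          by_cases htu : TransGen T x u
          · by_cases htv : TransGen T x v
            · have hr : R.ncard = 0 := hRzero (by rw [hru, hrv]; exact ⟨fun _ => htv, fun _ => htu⟩)
              obtain ⟨cu, hxcu, hcuu⟩ := TransGen.head'_iff.mp htu
              obtain ⟨cv, hxcv, hcvv⟩ := TransGen.head'_iff.mp htv
              by_cases hcc : cu = cv
              · have hS0 : S = ∅ := by
                  refine Set.eq_empty_iff_forall_notMem.mpr fun w hw => ?_
                  obtain ⟨h1, h2⟩ := hw
                  refine h2 ⟨fun h => ?_, fun h => ?_⟩
                  · have hw : w = cu := child_unique huniq hi h1 hxcu h hcuu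
                    rw [hw.trans hcc]; exact hcvv
                  · have hw : w = cv := child_unique huniq hi h1 hxcv h hcvv
                    rw [hw, ← hcc]; exact hcuu
                rw [hS0, Set.ncard_empty, hr]
                exact ⟨0, rfl⟩
              · have hSp : S = {cu, cv} := by
                  ext w
                  simp only [hS, Set.mem_setOf_eq, Set.mem_insert_iff, Set.mem_singleton_iff]
                  constructor
                  · rintro ⟨h1, h2⟩
                    by_cases hwu : ReflTransGen T w u
                    · exact Or.inl (child_unique huniq hi h1 hxcu hwu hcuu)
                    · have hwv : ReflTransGen T w v := by
                        by_contra hwv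
                        exact h2 ⟨fun h => (hwu h).elim, fun h => (hwv h).elim⟩
                      exact Or.inr (child_unique huniq hi h1 hxcv hwv hcvv)
                  · rintro (rfl | rfl)
                    · exact ⟨hxcu, fun hiff =>
                        hcc (child_unique huniq hi hxcu hxcv (hiff.mp hcuu) hcvv)⟩
                    · exact ⟨hxcv, fun hiff =>
                        hcc (child_unique huniq hi hxcu hxcv hcuu (hiff.mpr hcvv))⟩
                rw [hSp, Set.ncard_pair hcc, hr]
                exact ⟨1, rfl⟩
            · have hr : R.ncard = 1 := by
                refine hRone fun hiff => htv ?_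
                rw [← hrv]
                exact hiff.mp (hru.mpr htu)
              obtain ⟨cu, hxcu, hcuu⟩ := TransGen.head'_iff.mp htu
              have hSc : S = {cu} := by
                ext w
                simp only [hS, Set.mem_setOf_eq, Set.mem_singleton_iff]
                constructor
                · rintro ⟨h1, h2⟩
                  by_cases hwu : ReflTransGen T w u
                  · exact child_unique huniq hi h1 hxcu hwu hcuu
                  · have hwv : ReflTransGen T w v := by
                      by_contra hwv
                      exact h2 ⟨fun h => (hwu h).elim, fun h => (hwv h).elim⟩
                    exact (htv (TransGen.head' h1 hwv)).elim
                · rintro rfl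
                  refine ⟨hxcu, fun hiff => htv ?_⟩
                  exact TransGen.head' hxcu (hiff.mp hcuu)
              rw [hSc, Set.ncard_singleton, hr]
              exact ⟨1, rfl⟩
          · by_cases htv : TransGen T x v
            · have hr : R.ncard = 1 := by
                refine hRone fun hiff => htu ?_
                rw [← hru]
                exact hiff.mpr (hrv.mpr htv)
              obtain ⟨cv, hxcv, hcvv⟩ := TransGen.head'_iff.mp htv
              have hSc : S = {cv} := by
                ext w
                simp only [hS, Set.mem_setOf_eq, Set.mem_singleton_iff]
                constructor
                · rintro ⟨h1, h2⟩
                  by_cases hwv : ReflTransGen T w v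
                  · exact child_unique huniq hi h1 hxcv hwv hcvv
                  · have hwu : ReflTransGen T w u := by
                      by_contra hwu
                      exact h2 ⟨fun h => (hwu h).elim, fun h => (hwv h).elim⟩
                    exact (htu (TransGen.head' h1 hwu)).elim
                · rintro rfl
                  refine ⟨hxcv, fun hiff => htu ?_⟩
                  exact TransGen.head' hxcv (hiff.mpr hcvv)
              rw [hSc, Set.ncard_singleton, hr]
              exact ⟨1, rfl⟩
            · have hr : R.ncard = 0 := by
                refine hRzero ?_
                rw [hru, hrv]
                exact ⟨fun h => (htu h).elim, fun h => (htv h).elim⟩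
              have hS0 : S = ∅ := by
                refine Set.eq_empty_iff_forall_notMem.mpr fun w hw => ?_
                obtain ⟨h1, h2⟩ := hw
                refine h2 ⟨fun h => ?_, fun h => ?_⟩
                · exact (htu (TransGen.head' h1 h)).elim
                · exact (htv (TransGen.head' h1 h)).elim
              rw [hS0, Set.ncard_empty, hr]
              exact ⟨0, rfl⟩
    have hOT : Odd (A.ncard + B.ncard) := hodd x
    show Odd ({w | F x w}.ncard + {w | F w x}.ncard)
    rw [Nat.odd_iff] at hOT ⊢
    rw [Nat.even_iff] at heven
    generalize hgu : (if x = u then 1 else 0 : ℕ) = iu at hout heven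
    generalize hgv : (if x = v then 1 else 0 : ℕ) = iv at hin heven
    omega
  refine ⟨hForest, hSubd, hodds, ?_⟩
  -- arc count
  have hPT : {p : V × V | onPath T u v p.1 p.2} ⊆ {p : V × V | T p.1 p.2} :=
    fun p hp => ((hchar _ _).mp hp).1
  have hFS : {p : V × V | F p.1 p.2} =
      insert (u, v) ({p : V × V | T p.1 p.2} \ {p : V × V | onPath T u v p.1 p.2}) := by
    ext ⟨a, b⟩
    constructor
    · rintro (⟨rfl, rfl⟩ | ⟨h1, h2⟩)
      · exact Set.mem_insert _ _
      · exact Set.mem_insert_of_mem _ ⟨h1, h2⟩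
    · rintro (h | ⟨h1, h2⟩)
      · rw [Prod.mk.injEq] at h
        exact Or.inl h
      · exact Or.inr ⟨h1, h2⟩
  have hnm : (u, v) ∉ {p : V × V | T p.1 p.2} \ {p : V × V | onPath T u v p.1 p.2} :=
    fun h => hnotT h.1
  obtain ⟨pv, hpv⟩ : ∃ p, T p v := has_parent huniq (hconn v u) hnrvu
  have he1 : (pv, v) ∈ {p : V × V | onPath T u v p.1 p.2} := hpathv pv hpv
  have he2 : ∃ e ∈ {p : V × V | onPath T u v p.1 p.2}, e ≠ (pv, v) := by
    by_cases hruv : ReflTransGen T u v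
    · have htuv : TransGen T u v := by
        rcases reflTransGen_iff_eq_or_transGen.mp hruv with h | h
        · exact (hne h.symm).elim
        · exact h
      obtain ⟨c, hxc, hcv⟩ := TransGen.head'_iff.mp htuv
      refine ⟨(u, c), (hchar _ _).mpr ⟨hxc, fun hiff => ?_⟩, fun h => ?_⟩
      · exact hi u (TransGen.head' hxc (hiff.mpr hcv))
      · rw [Prod.mk.injEq] at h
        exact hnotT (h.2 ▸ hxc)
    · obtain ⟨pu, hpu⟩ := has_parent huniq (hconn u v) hruv
      refine ⟨(pu, u), (hchar _ _).mpr ⟨hpu, fun hiff => hruv (hiff.mp .refl)⟩, fun h => ?_⟩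
      rw [Prod.mk.injEq] at h
      exact hne h.2
  obtain ⟨e2, he2m, he2ne⟩ := he2
  have hpair : ({e2, (pv, v)} : Set (V × V)) ⊆ {p : V × V | onPath T u v p.1 p.2} := by
    rintro p (rfl | rfl)
    · exact he2m
    · exact he1
  have h2le : 2 ≤ {p : V × V | onPath T u v p.1 p.2}.ncard := by
    have := Set.ncard_le_ncard hpair (Set.toFinite _)
    rwa [Set.ncard_pair he2ne] at this
  have hle : {p : V × V | onPath T u v p.1 p.2}.ncard ≤ {p : V × V | T p.1 p.2}.ncard :=
    Set.ncard_le_ncard hPT (Set.toFinite _)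
  have : {p : V × V | F p.1 p.2}.ncard <  {p : V × V | T p.1 p.2}.ncard := by
    rw [hFS, Set.ncard_insert_of_notMem hnm (Set.toFinite _),
      Set.ncard_diff hPT (Set.toFinite _)]
    omega
  exact this
end

section
/- In the proof construction of Theorem 4: given a digraph D on n = 2k vertices, build a graph G with vertex sets X_u (|X_u| = 2k-1) for each vertex u of D, where X_u contains a matching of k-1 edges and one isolated vertex y_u, and with all edges from X_u to y_v added for each arc uv of D. If G has a perfect matching, then D contains a weak perfect out-forest. -/
/-- The graph of the construction in Theorem 4: for each vertex `u` of `D` a gadget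
`X_u` of `2k-1` vertices (indices `0,…,2k-2`) containing the `k-1` matching edges
`{2i, 2i+1}` and the isolated vertex `y_u` of index `2k-2`, together with all edges
from `X_u` to `y_v` for every arc `uv` of `D`. -/
def Gadj {V : Type*} (D : V → V → Prop) (k : ℕ) :
    V × Fin (2*k-1) → V × Fin (2*k-1) → Prop := fun a b =>
  (a.1 = b.1 ∧ ((a.2.val + 1 = b.2.val ∧ Even a.2.val ∧ b.2.val < 2*k-2) ∨
                (b.2.val + 1 = a.2.val ∧ Even b.2.val ∧ a.2.val < 2*k-2)))
  ∨ (D a.1 b.1 ∧ b.2.val = 2*k-2) ∨ (D b.1 a.1 ∧ a.2.val = 2*k-2)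

namespace Stmt14Aux

variable {V : Type*}

def hubC (k : ℕ) (hk : 0 < k) (v : V) : V × Fin (2*k-1) := (v, ⟨2*k-2, by omega⟩)

def gC (k : ℕ) (hk : 0 < k) (f : V × Fin (2*k-1) → V × Fin (2*k-1)) (v : V) : V :=
  (f (hubC k hk v)).1

def PC (k : ℕ) (hk : 0 < k) (f : V × Fin (2*k-1) → V × Fin (2*k-1)) (v : V) : Prop :=
  ((f (hubC k hk v)).2).val = 2*k-2

def piC (k : ℕ) (x : Fin (2*k-1)) : Fin (2*k-1) :=
  if h : x.val % 2 = 0 ∧ x.val + 1 < 2*k-1 then ⟨x.val + 1, h.2⟩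
  else ⟨x.val - 1, lt_of_le_of_lt (Nat.sub_le _ _) x.isLt⟩

def pA (D : V → V → Prop) (r : V → V → Prop) (k : ℕ) (hk : 0 < k)
    (f : V × Fin (2*k-1) → V × Fin (2*k-1)) (u v : V) : Prop :=
  PC k hk f u ∧ gC k hk f u = v ∧ D u v ∧ (D v u → r u v)

def F0 (D : V → V → Prop) (r : V → V → Prop) (k : ℕ) (hk : 0 < k)
    (f : V × Fin (2*k-1) → V × Fin (2*k-1)) (u v : V) : Prop :=
  (¬ PC k hk f v ∧ gC k hk f v = u) ∨ pA D r k hk f u v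

section Lemmas

variable {D : V → V → Prop} {r : V → V → Prop} {k : ℕ} {hk : 0 < k}
  {f : V × Fin (2*k-1) → V × Fin (2*k-1)}

lemma piC_spec (x : Fin (2*k-1)) (hx : x.val < 2*k-2) :
    (x.val % 2 = 0 ∧ (piC k x).val = x.val + 1) ∨
    (x.val % 2 = 1 ∧ (piC k x).val + 1 = x.val) := by
  by_cases h : x.val % 2 = 0
  · left
    refine ⟨h, ?_⟩
    rw [piC, dif_pos ⟨h, by omega⟩]
  · right
    refine ⟨by omega, ?_⟩
    rw [piC, dif_neg (by omega)]
    simp only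
    omega

lemma piC_lt (x : Fin (2*k-1)) (hx : x.val < 2*k-2) : (piC k x).val < 2*k-2 := by
  rcases piC_spec x hx with ⟨h1, h2⟩ | ⟨h1, h2⟩ <;> omega

lemma piC_piC (x : Fin (2*k-1)) (hx : x.val < 2*k-2) : piC k (piC k x) = x := by
  have h1 := piC_spec x hx
  have h2 := piC_spec (piC k x) (piC_lt x hx)
  apply Fin.val_injective
  rcases h1 with ⟨ha, hb⟩ | ⟨ha, hb⟩ <;> rcases h2 with ⟨hc, hd⟩ | ⟨hc, hd⟩ <;> omega

lemma piC_ne (x : Fin (2*k-1)) (hx : x.val < 2*k-2) : piC k x ≠ x := by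
  intro h
  have h1 := piC_spec x hx
  have := congrArg Fin.val h
  omega

/-- The adjacency of the matched partner of a hub. -/
lemma gadj_hub (hf : ∀ a, f a ≠ a ∧ f (f a) = a ∧ Gadj D k a (f a)) (v : V) :
    D (gC k hk f v) v ∨ (PC k hk f v ∧ D v (gC k hk f v)) := by
  obtain ⟨hne, hinv, hadj⟩ := hf (hubC k hk v)
  rcases hadj with ⟨h1, h2⟩ | ⟨h1, h2⟩ | ⟨h1, h2⟩
  · exfalso
    have ha : (hubC k hk v).2.val = 2*k-2 := rfl
    have hb := (f (hubC k hk v)).2.isLt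
    rcases h2 with ⟨hc, _, hd⟩ | ⟨hc, _, hd⟩ <;> omega
  · exact Or.inr ⟨h2, h1⟩
  · exact Or.inl h1

lemma g_ne (hf : ∀ a, f a ≠ a ∧ f (f a) = a ∧ Gadj D k a (f a))
    (hirr : Irreflexive D) (v : V) : gC k hk f v ≠ v := by
  intro h
  rcases gadj_hub hf v with h1 | ⟨_, h1⟩ <;> rw [h] at h1 <;> exact hirr v h1

lemma hub_eq_of_P {v : V} (hP : PC k hk f v) :
    f (hubC k hk v) = hubC k hk (gC k hk f v) := by
  have : (f (hubC k hk v)).2 = (⟨2*k-2, by omega⟩ : Fin (2*k-1)) :=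
    Fin.val_injective hP
  exact Prod.ext rfl this

lemma P_g (hf : ∀ a, f a ≠ a ∧ f (f a) = a ∧ Gadj D k a (f a)) {v : V} (hP : PC k hk f v) :
    PC k hk f (gC k hk f v) ∧ gC k hk f (gC k hk f v) = v := by
  have h1 : f (hubC k hk (gC k hk f v)) = hubC k hk v := by
    rw [← hub_eq_of_P hP, (hf (hubC k hk v)).2.1]
  constructor
  · show ((f (hubC k hk (gC k hk f v))).2).val = 2*k-2
    rw [h1]; rfl
  · show (f (hubC k hk (gC k hk f v))).1 = v
    rw [h1]; rfl

lemma F0_src (hf : ∀ a, f a ≠ a ∧ f (f a) = a ∧ Gadj D k a (f a)) {u v : V} (h : F0 D r k hk f u v) : u = gC k hk f v := by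
  rcases h with ⟨_, h1⟩ | ⟨h1, h2, _⟩
  · exact h1.symm
  · rw [← h2]; exact ((P_g hf h1).2).symm

lemma F0_sub (hf : ∀ a, f a ≠ a ∧ f (f a) = a ∧ Gadj D k a (f a)) {u v : V} (h : F0 D r k hk f u v) : D u v := by
  rcases h with ⟨h1, h2⟩ | ⟨_, _, h3, _⟩
  · rcases gadj_hub hf v with h3 | ⟨h3, _⟩
    · rw [← h2]; exact h3
    · exact absurd h3 h1
  · exact h3

lemma even_ncard_invol_aux {α : Type*} [Finite α] (n : ℕ) :
    ∀ (s : Set α) (π : α → α), s.ncard = n →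
    (∀ x ∈ s, π x ∈ s) → (∀ x ∈ s, π (π x) = x) → (∀ x ∈ s, π x ≠ x) →
    Even s.ncard := by
  induction n using Nat.strong_induction_on with
  | _ n ih =>
    intro s π hn h1 h2 h3
    rcases s.eq_empty_or_nonempty with rfl | ⟨x, hx⟩
    · simp
    · have hfin : s.Finite := Set.toFinite s
      set s' : Set α := s \ {x, π x} with hs'
      have hsub : ({x, π x} : Set α) ⊆ s := by
        intro y hy; rcases hy with rfl | rfl
        · exact hx
        · exact h1 x hx
      have hpair : ({x, π x} : Set α).ncard = 2 := Set.ncard_pair (Ne.symm (h3 x hx))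
      have hcard : s'.ncard = s.ncard - 2 := by
        rw [hs', Set.ncard_diff hsub, hpair]
      have hle : 2 ≤ s.ncard := by
        have := Set.ncard_le_ncard hsub hfin
        omega
      have h1' : ∀ y ∈ s', π y ∈ s' := by
        intro y hy
        obtain ⟨hys, hyn⟩ := hy
        refine ⟨h1 y hys, ?_⟩
        intro hmem
        rcases hmem with h | h
        · exact hyn (by right; rw [← h2 y hys, h]; exact (h2 x hx) ▸ rfl)
        · apply hyn; left
          have := congrArg π h
          rw [h2 y hys, h2 x hx] at this
          exact this
      have h2' : ∀ y ∈ s', π (π y) = y := fun y hy => h2 y hy.1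
      have h3' : ∀ y ∈ s', π y ≠ y := fun y hy => h3 y hy.1
      have hev : Even s'.ncard := by
        refine ih (n - 2) ?_ s' π ?_ h1' h2' h3'
        · omega
        · omega
      rw [hcard] at hev
      rcases hev with ⟨c, hc⟩
      exact ⟨c + 1, by omega⟩

lemma even_ncard_invol {α : Type*} [Finite α] (s : Set α) (π : α → α)
    (h1 : ∀ x ∈ s, π x ∈ s) (h2 : ∀ x ∈ s, π (π x) = x) (h3 : ∀ x ∈ s, π x ≠ x) :
    Even s.ncard := even_ncard_invol_aux s.ncard s π rfl h1 h2 h3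

section Parity

variable {D : V → V → Prop} {k : ℕ} {hk : 0 < k}
  {f : V × Fin (2*k-1) → V × Fin (2*k-1)}

/-- The matched partner of the pair-partner of an externally matched non-hub is a hub. -/
lemma partner_key (hf : ∀ a, f a ≠ a ∧ f (f a) = a ∧ Gadj D k a (f a))
    {u v : V} (hP : ¬ PC k hk f v) (hg : gC k hk f v = u) :
    ((f (u, piC k ((f (hubC k hk v)).2))).2).val = 2*k-2 := by
  set x : Fin (2*k-1) := (f (hubC k hk v)).2 with hxdef
  have hfv : f (hubC k hk v) = (u, x) := by
    rw [← hg]; exact Prod.ext rfl rfl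
  have hfx : f (u, x) = hubC k hk v := by
    rw [← hfv, (hf (hubC k hk v)).2.1]
  have hxne : x.val ≠ 2*k-2 := hP
  have hxlt : x.val < 2*k-2 := by
    have := x.isLt; omega
  have hpispec := piC_spec (k := k) x hxlt
  have hpilt : (piC k x).val < 2*k-2 := piC_lt (k := k) x hxlt
  obtain ⟨hne, hinv, hadj⟩ := hf (u, piC k x)
  simp only [Gadj] at hadj
  rcases hadj with ⟨h1, h2⟩ | ⟨h1, h2⟩ | ⟨h1, h2⟩
  · exfalso
    -- the partner of piC x inside the gadget is x itself, contradiction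
    have hbx : (f (u, piC k x)).2 = x := by
      apply Fin.val_injective
      rcases h2 with ⟨ha, hb, hc⟩ | ⟨ha, hb, hc⟩ <;>
        rcases hpispec with ⟨hd, he⟩ | ⟨hd, he⟩ <;>
        · rw [Nat.even_iff] at hb
          omega
    have hbu : (f (u, piC k x)).1 = u := h1.symm
    have hfb : f (u, piC k x) = (u, x) := Prod.ext hbu hbx
    have : f (u, x) = (u, piC k x) := by
      rw [← hfb, hinv]
    rw [hfx] at this
    have : (2*k-2 : ℕ) = (piC k x).val := congrArg (fun p => p.2.val) this
    omega
  · exact h2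
  · exfalso
    omega

lemma N_even [Finite V] (hf : ∀ a, f a ≠ a ∧ f (f a) = a ∧ Gadj D k a (f a))
    (u : V) :
    Even {v : V | ¬ PC k hk f v ∧ gC k hk f v = u}.ncard := by
  classical
  set s : Set V := {v : V | ¬ PC k hk f v ∧ gC k hk f v = u} with hs
  set ψ : V → V := fun v => (f (u, piC k ((f (hubC k hk v)).2))).1 with hψ
  -- basic facts for a member
  have main : ∀ v ∈ s, f (hubC k hk (ψ v)) = (u, piC k ((f (hubC k hk v)).2)) ∧
      ((f (hubC k hk v)).2).val < 2*k-2 := by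
    intro v hv
    obtain ⟨hP, hg⟩ := hv
    set x : Fin (2*k-1) := (f (hubC k hk v)).2 with hxdef
    have hxlt : x.val < 2*k-2 := by
      have := x.isLt
      have hxne : x.val ≠ 2*k-2 := hP
      omega
    have hkey := partner_key hf hP hg
    have hhub : f (u, piC k x) = hubC k hk (ψ v) := by
      refine Prod.ext rfl (Fin.val_injective ?_)
      exact hkey
    have : f (hubC k hk (ψ v)) = (u, piC k x) := by
      rw [← hhub, (hf (u, piC k x)).2.1]
    exact ⟨this, hxlt⟩
  have hmem : ∀ v ∈ s, ψ v ∈ s := by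
    intro v hv
    obtain ⟨hmain, hxlt⟩ := main v hv
    constructor
    · show ((f (hubC k hk (ψ v))).2).val ≠ 2*k-2
      rw [hmain]
      have := piC_lt (k := k) _ hxlt
      simp only
      omega
    · show (f (hubC k hk (ψ v))).1 = u
      rw [hmain]
  have hinvol : ∀ v ∈ s, ψ (ψ v) = v := by
    intro v hv
    obtain ⟨hmain, hxlt⟩ := main v hv
    obtain ⟨hP, hg⟩ := hv
    have hfv : f (hubC k hk v) = (u, (f (hubC k hk v)).2) := by
      rw [← hg]; exact Prod.ext rfl rfl
    have h2 : piC k ((f (hubC k hk (ψ v))).2) = (f (hubC k hk v)).2 := by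
      rw [hmain]
      exact piC_piC (k := k) _ hxlt
    show (f (u, piC k ((f (hubC k hk (ψ v))).2))).1 = v
    rw [h2, ← hfv, (hf (hubC k hk v)).2.1]
    rfl
  have hne : ∀ v ∈ s, ψ v ≠ v := by
    intro v hv heq
    obtain ⟨hmain, hxlt⟩ := main v hv
    obtain ⟨hP, hg⟩ := hv
    rw [heq] at hmain
    have hfv : f (hubC k hk v) = (u, (f (hubC k hk v)).2) := by
      rw [← hg]; exact Prod.ext rfl rfl
    rw [hfv] at hmain
    have : (f (hubC k hk v)).2 = piC k (f (hubC k hk v)).2 := congrArg Prod.snd hmain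
    exact piC_ne (k := k) _ hxlt this.symm
  exact even_ncard_invol s ψ hmem hinvol hne

end Parity

section Pairs

variable {D r : V → V → Prop} {k : ℕ} {hk : 0 < k}
  {f : V × Fin (2*k-1) → V × Fin (2*k-1)}

lemma pair_cases (hf : ∀ a, f a ≠ a ∧ f (f a) = a ∧ Gadj D k a (f a))
    (hirr : Irreflexive D) (hr1 : ∀ u v : V, u ≠ v → (r u v ∨ r v u))
    {v : V} (hP : PC k hk f v) :
    pA D r k hk f v (gC k hk f v) ∨ pA D r k hk f (gC k hk f v) v := by
  have hPu : PC k hk f (gC k hk f v) := (P_g hf hP).1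
  have hgu : gC k hk f (gC k hk f v) = v := (P_g hf hP).2
  have hne : gC k hk f v ≠ v := g_ne hf hirr v
  have hD : D (gC k hk f v) v ∨ D v (gC k hk f v) := by
    rcases gadj_hub hf v with h | ⟨_, h⟩
    · exact Or.inl h
    · exact Or.inr h
  by_cases hDuv : D (gC k hk f v) v <;> by_cases hDvu : D v (gC k hk f v)
  · rcases hr1 (gC k hk f v) v hne with h | h
    · exact Or.inr ⟨hPu, hgu, hDuv, fun _ => h⟩
    · exact Or.inl ⟨hP, rfl, hDvu, fun _ => h⟩
  · exact Or.inr ⟨hPu, hgu, hDuv, fun h => absurd h hDvu⟩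
  · exact Or.inl ⟨hP, rfl, hDvu, fun h => absurd h hDuv⟩
  · rcases hD with h | h
    · exact absurd h hDuv
    · exact absurd h hDvu

lemma pair_not_both (hr2 : ∀ u v : V, r u v → ¬ r v u)
    {v u : V} (h1 : pA D r k hk f v u) (h2 : pA D r k hk f u v) : False := by
  obtain ⟨_, _, hD1, hc1⟩ := h1
  obtain ⟨_, _, hD2, hc2⟩ := h2
  exact hr2 v u (hc1 hD2) (hc2 hD1)

lemma reach_iter (hf : ∀ a, f a ≠ a ∧ f (f a) = a ∧ Gadj D k a (f a))
    {w v : V} (h : Relation.TransGen (F0 D r k hk f) w v) :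
    ∃ n : ℕ, (gC k hk f)^[n+1] v = w := by
  induction h with
  | single h => exact ⟨0, by simpa using (F0_src hf h).symm⟩
  | tail hab hbc ih =>
    obtain ⟨n, hn⟩ := ih
    refine ⟨n+1, ?_⟩
    rw [Function.iterate_succ_apply]
    show (gC k hk f)^[n+1] (gC k hk f _) = w
    rw [← F0_src hf hbc]
    exact hn

lemma rem_unique (hf : ∀ a, f a ≠ a ∧ f (f a) = a ∧ Gadj D k a (f a))
    {v w w' : V} (h1 : F0 D r k hk f v w)
    (h2 : Relation.TransGen (F0 D r k hk f) w v)
    (h3 : F0 D r k hk f v w')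
    (h4 : Relation.TransGen (F0 D r k hk f) w' v) : w = w' := by
  obtain ⟨n, hn⟩ := reach_iter hf h2
  obtain ⟨m, hm⟩ := reach_iter hf h4
  have e1 : gC k hk f w = v := (F0_src hf h1).symm
  have e2 : gC k hk f w' = v := (F0_src hf h3).symm
  have hcyc1 : (gC k hk f)^[n+2] v = v := by
    rw [show n+2 = (n+1)+1 from rfl, Function.iterate_succ_apply', hn, e1]
  have hcyc2 : (gC k hk f)^[m+2] v = v := by
    rw [show m+2 = (m+1)+1 from rfl, Function.iterate_succ_apply', hm, e2]
  calc w = (gC k hk f)^[n+1] v := hn.symm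
    _ = (gC k hk f)^[n+1] ((gC k hk f)^[m+2] v) := by rw [hcyc2]
    _ = (gC k hk f)^[(n+1)+(m+2)] v := (Function.iterate_add_apply _ _ _ _).symm
    _ = (gC k hk f)^[(m+1)+(n+2)] v := by ring_nf
    _ = (gC k hk f)^[m+1] ((gC k hk f)^[n+2] v) := Function.iterate_add_apply _ _ _ _
    _ = (gC k hk f)^[m+1] v := by rw [hcyc1]
    _ = w' := hm

lemma cyc_in (hf : ∀ a, f a ≠ a ∧ f (f a) = a ∧ Gadj D k a (f a))
    (hirr : Irreflexive D) {v : V}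
    (h : Relation.TransGen (F0 D r k hk f) v v) :
    F0 D r k hk f (gC k hk f v) v ∧
      Relation.TransGen (F0 D r k hk f) v (gC k hk f v) := by
  obtain ⟨b, hb1, hb2⟩ := (Relation.TransGen.tail'_iff).1 h
  have hbv : b = gC k hk f v := F0_src hf hb2
  rcases (Relation.reflTransGen_iff_eq_or_transGen.1 hb1) with h' | h'
  · exact absurd (h' ▸ hb2) (fun hc => hirr v (F0_sub hf hc))
  · exact ⟨hbv ▸ hb2, hbv ▸ h'⟩

lemma cyc_out (hf : ∀ a, f a ≠ a ∧ f (f a) = a ∧ Gadj D k a (f a))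
    (hirr : Irreflexive D) {v : V}
    (h : Relation.TransGen (F0 D r k hk f) v v) :
    ∃ c, F0 D r k hk f v c ∧ Relation.TransGen (F0 D r k hk f) c v := by
  obtain ⟨b, hb1, hb2⟩ := (Relation.TransGen.head'_iff).1 h
  refine ⟨b, hb1, ?_⟩
  rcases (Relation.reflTransGen_iff_eq_or_transGen.1 hb2) with h' | h'
  · exact absurd (h'.symm ▸ hb1) (fun hc => hirr v (F0_sub hf hc))
  · exact h'

lemma cyc_notP (hf : ∀ a, f a ≠ a ∧ f (f a) = a ∧ Gadj D k a (f a))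
    (hirr : Irreflexive D) (hr2 : ∀ u v : V, r u v → ¬ r v u) {v : V}
    (h : Relation.TransGen (F0 D r k hk f) v v) : ¬ PC k hk f v := by
  intro hP
  obtain ⟨ha, hb⟩ := cyc_in (r := r) hf hirr h
  have hpa1 : pA D r k hk f (gC k hk f v) v := by
    rcases ha with ⟨hnp, _⟩ | hp
    · exact absurd hP hnp
    · exact hp
  have hcyc2 : Relation.TransGen (F0 D r k hk f) (gC k hk f v) (gC k hk f v) :=
    Relation.TransGen.head ha hb
  obtain ⟨hc, _⟩ := cyc_in (r := r) hf hirr hcyc2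
  rw [(P_g hf hP).2] at hc
  have hpa2 : pA D r k hk f v (gC k hk f v) := by
    rcases hc with ⟨hnp, _⟩ | hp
    · exact absurd (P_g hf hP).1 hnp
    · exact hp
  exact pair_not_both hr2 hpa2 hpa1

end Pairs

end Lemmas

end Stmt14Aux


/-- If the constructed graph `G` has a perfect matching, then `D` has a weak perfect
out-forest. -/
theorem stmt14 {V : Type*} [Fintype V] (D : V → V → Prop) (k : ℕ) (hk : 0 < k)
    (hcard : Fintype.card V = 2*k) (hirr : Irreflexive D)
    (hM : ∃ f : V × Fin (2*k-1) → V × Fin (2*k-1),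
      ∀ a, f a ≠ a ∧ f (f a) = a ∧ Gadj D k a (f a)) :
    ∃ F, WeakPerfect D F := by
  classical
  obtain ⟨f, hf⟩ := hM
  set r : V → V → Prop := WellOrderingRel with hrdef
  have hr1 : ∀ u v : V, u ≠ v → (r u v ∨ r v u) := by
    intro u v h
    rcases trichotomous_of WellOrderingRel u v with h1 | h1 | h1
    · exact Or.inl h1
    · exact absurd h1 h
    · exact Or.inr h1
  have hr2 : ∀ u v : V, r u v → ¬ r v u := by
    intro u v h h'
    exact irrefl_of WellOrderingRel u (_root_.trans h h')
  set F0' : V → V → Prop := Stmt14Aux.F0 D r k hk f with hF0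
  set F : V → V → Prop := fun u v => F0' u v ∧ ¬ Relation.TransGen F0' v u with hFdef
  refine ⟨F, ?_, ⟨?_, ?_⟩, ?_⟩
  · -- Subd
    intro a b hab
    exact Stmt14Aux.F0_sub hf hab.1
  · -- acyclic
    intro v hv
    obtain ⟨b, hb1, hb2⟩ := (Relation.TransGen.head'_iff).1 hv
    rcases Relation.reflTransGen_iff_eq_or_transGen.1 hb2 with h' | h'
    · exact hirr b (Stmt14Aux.F0_sub hf ((h' ▸ hb1 : F b b)).1)
    · exact hb1.2 (Relation.TransGen.mono (p := F0') (fun x y (hxy : F x y) => hxy.1) b v h')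
  · -- in-degree at most one
    intro u u' w h h'
    exact (Stmt14Aux.F0_src hf h.1).trans (Stmt14Aux.F0_src hf h'.1).symm
  · -- all degrees odd
    intro v
    set Nv : Set V := {w : V | ¬ Stmt14Aux.PC k hk f w ∧ Stmt14Aux.gC k hk f w = v}
      with hNvdef
    have hNe : Even Nv.ncard := Stmt14Aux.N_even hf v
    show Odd ({w | F v w}.ncard + {w | F w v}.ncard)
    by_cases hcyc : Relation.TransGen F0' v v
    · -- v lies on a cycle of F0'
      have hP : ¬ Stmt14Aux.PC k hk f v := Stmt14Aux.cyc_notP hf hirr hr2 hcyc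
      obtain ⟨c, hc1, hc2⟩ := Stmt14Aux.cyc_out hf hirr hcyc
      obtain ⟨hin1, hin2⟩ := Stmt14Aux.cyc_in hf hirr hcyc
      have hcN : c ∈ Nv := by
        rcases hc1 with ⟨h1, h2⟩ | h1
        · exact ⟨h1, h2⟩
        · exact absurd h1.1 hP
      have hout : {w : V | F v w} = Nv \ {c} := by
        ext w
        constructor
        · rintro ⟨hw1, hw2⟩
          have hwN : w ∈ Nv := by
            rcases hw1 with ⟨h1, h2⟩ | h1
            · exact ⟨h1, h2⟩
            · exact absurd h1.1 hP
          refine ⟨hwN, ?_⟩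
          intro hwc
          rw [Set.mem_singleton_iff] at hwc
          subst hwc
          exact hw2 hc2
        · rintro ⟨⟨hw1, hw2⟩, hwc⟩
          have hF0vw : F0' v w := Or.inl ⟨hw1, hw2⟩
          refine ⟨hF0vw, ?_⟩
          intro htg
          exact hwc (Set.mem_singleton_iff.2 (Stmt14Aux.rem_unique hf hF0vw htg hc1 hc2))
      have hin : {w : V | F w v} = ∅ := by
        ext w
        simp only [Set.mem_empty_iff_false, iff_false, Set.mem_setOf_eq]
        rintro ⟨hw1, hw2⟩
        have hw : w = Stmt14Aux.gC k hk f v := Stmt14Aux.F0_src hf hw1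
        rw [hw] at hw2
        exact hw2 hin2
      rw [hout, hin]
      have h1 : (Nv \ {c}).ncard = Nv.ncard - 1 := Set.ncard_diff_singleton_of_mem hcN
      have h2 : 0 < Nv.ncard := (Set.ncard_pos).2 ⟨c, hcN⟩
      rw [h1]
      simp only [Set.ncard_empty, add_zero]
      rcases hNe with ⟨t, ht⟩
      exact ⟨t - 1, by omega⟩
    · -- v does not lie on a cycle of F0'
      have hout : {w : V | F v w} = {w : V | F0' v w} := by
        ext w
        constructor
        · exact fun h => h.1
        · intro h
          exact ⟨h, fun htg => hcyc (Relation.TransGen.head h htg)⟩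
      have hin : {w : V | F w v} = {w : V | F0' w v} := by
        ext w
        constructor
        · exact fun h => h.1
        · intro h
          exact ⟨h, fun htg => hcyc (Relation.TransGen.tail htg h)⟩
      rw [hout, hin]
      by_cases hP : Stmt14Aux.PC k hk f v
      · rcases Stmt14Aux.pair_cases hf hirr hr1 hP with hpa | hpa
        · -- the pair arc goes out of v
          have hout2 : {w : V | F0' v w} = insert (Stmt14Aux.gC k hk f v) Nv := by
            ext w
            constructor
            · rintro (⟨h1, h2⟩ | h1)
              · exact Set.mem_insert_of_mem _ ⟨h1, h2⟩
              · exact h1.2.1 ▸ Set.mem_insert _ _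
            · rintro (rfl | hw)
              · exact Or.inr hpa
              · exact Or.inl ⟨hw.1, hw.2⟩
          have hgNv : Stmt14Aux.gC k hk f v ∉ Nv := fun h => h.1 ((Stmt14Aux.P_g hf hP).1)
          have hin2 : {w : V | F0' w v} = ∅ := by
            ext w
            simp only [Set.mem_empty_iff_false, iff_false, Set.mem_setOf_eq]
            rintro (⟨h1, _⟩ | h1)
            · exact h1 hP
            · have hw : w = Stmt14Aux.gC k hk f v := Stmt14Aux.F0_src hf (Or.inr h1)
              subst hw
              exact Stmt14Aux.pair_not_both hr2 hpa h1
          rw [hout2, hin2, Set.ncard_insert_of_notMem hgNv, Set.ncard_empty]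
          rcases hNe with ⟨t, ht⟩
          exact ⟨t, by omega⟩
        · -- the pair arc comes into v
          have hout2 : {w : V | F0' v w} = Nv := by
            ext w
            constructor
            · rintro (⟨h1, h2⟩ | h1)
              · exact ⟨h1, h2⟩
              · exfalso
                have hw : Stmt14Aux.gC k hk f v = w := h1.2.1
                subst hw
                exact Stmt14Aux.pair_not_both hr2 h1 hpa
            · exact fun hw => Or.inl ⟨hw.1, hw.2⟩
          have hin2 : {w : V | F0' w v} = {Stmt14Aux.gC k hk f v} := by
            ext w
            constructor
            · intro h
              exact Set.mem_singleton_iff.2 (Stmt14Aux.F0_src hf h)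
            · intro h
              rw [Set.mem_singleton_iff] at h
              subst h
              exact Or.inr hpa
          rw [hout2, hin2, Set.ncard_singleton]
          rcases hNe with ⟨t, ht⟩
          exact ⟨t, by omega⟩
      · -- v is matched to a non-hub
        have hout2 : {w : V | F0' v w} = Nv := by
          ext w
          constructor
          · rintro (⟨h1, h2⟩ | h1)
            · exact ⟨h1, h2⟩
            · exact absurd h1.1 hP
          · exact fun hw => Or.inl ⟨hw.1, hw.2⟩
        have hin2 : {w : V | F0' w v} = {Stmt14Aux.gC k hk f v} := by
          ext w
          constructor
          · intro h
            exact Set.mem_singleton_iff.2 (Stmt14Aux.F0_src hf h)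
          · intro h
            rw [Set.mem_singleton_iff] at h
            subst h
            exact Or.inl ⟨hP, rfl⟩
        rw [hout2, hin2, Set.ncard_singleton]
        rcases hNe with ⟨t, ht⟩
        exact ⟨t, by omega⟩
end

section
/- In the construction of Theorem 4: if the digraph D contains a weak perfect out-forest, then the associated graph G (with a gadget X_u of 2k-1 vertices and a near-perfect matching for each vertex u of D, isolated gadget vertex y_u, and complete bipartite edges from X_u to y_v for each arc uv) has a perfect matching. -/
open Classical in
noncomputable def pax {V : Type*} (F : V → V → Prop) (v : V) : V :=
  if h : ∃ u, F u v then h.choose else v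

open Classical in
noncomputable def spx {V : Type*} (F : V → V → Prop) (v : V) : V :=
  if h : ∃ w, F v w then h.choose else v

open Classical in
noncomputable def ach {V : Type*} [Fintype V] (F : V → V → Prop) (u : V) : Finset V :=
  Finset.univ.filter (fun v => F u v ∧ ¬ ((∀ x, ¬ F x u) ∧ spx F u = v))

open Classical in
lemma mem_ach {V : Type*} [Fintype V] (F : V → V → Prop) (u v : V) :
    v ∈ ach F u ↔ F u v ∧ ¬ ((∀ x, ¬ F x u) ∧ spx F u = v) := by
  simp [ach]

lemma pax_eq {V : Type*} (F : V → V → Prop)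
    (hUniq : ∀ u v w, F u w → F v w → u = v) {u v : V} (h : F u v) : pax F v = u := by
  unfold pax
  rw [dif_pos ⟨u, h⟩]
  exact hUniq _ _ _ (Exists.choose_spec (⟨u, h⟩ : ∃ x, F x v)) h

lemma spx_spec {V : Type*} (F : V → V → Prop) {r : V} (h : ∃ w, F r w) : F r (spx F r) := by
  unfold spx
  rw [dif_pos h]
  exact h.choose_spec

section Facts
variable {V : Type*} [Fintype V] {F : V → V → Prop}

open Classical in
lemma out_card {u : V} :
    {w | F u w}.ncard = (Finset.univ.filter (fun w => F u w)).card := by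
  rw [← Set.ncard_coe_finset]; congr 1; ext w; simp

open Classical in
lemma in_card {u : V} :
    {w | F w u}.ncard = (Finset.univ.filter (fun w => F w u)).card := by
  rw [← Set.ncard_coe_finset]; congr 1; ext w; simp

open Classical in
lemma root_exists_out (hOdd : ∀ v, Odd (udeg F v)) {r : V} (hr : ∀ x, ¬ F x r) :
    ∃ w, F r w := by
  have h1 : {w | F w r} = ∅ := by ext w; simp [hr w]
  have h2 := hOdd r
  unfold udeg at h2
  rw [h1] at h2
  simp at h2
  have h3 : {w | F r w}.ncard ≠ 0 := by
    intro h; rw [h] at h2; simp [Nat.odd_iff] at h2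
  obtain ⟨w, hw⟩ := Set.nonempty_of_ncard_ne_zero h3
  exact ⟨w, hw⟩

open Classical in
lemma ach_card {k : ℕ} (hOdd : ∀ v, Odd (udeg F v))
    (hUniq : ∀ u v w, F u w → F v w → u = v)
    (hirrF : ∀ v, ¬ F v v) (hcard : Fintype.card V = 2*k) (u : V) :
    Even (ach F u).card ∧ (ach F u).card ≤ 2*k - 2 := by
  classical
  have houtle : (Finset.univ.filter (fun w => F u w)).card ≤ 2*k - 1 := by
    have hsub : (Finset.univ.filter (fun w => F u w)) ⊆ Finset.univ.erase u := by
      intro w hw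
      simp only [Finset.mem_filter] at hw
      refine Finset.mem_erase.2 ⟨?_, Finset.mem_univ _⟩
      rintro rfl
      exact hirrF _ hw.2
    have h2 := Finset.card_le_card hsub
    rw [Finset.card_erase_of_mem (Finset.mem_univ u), Finset.card_univ, hcard] at h2
    omega
  by_cases hr : ∀ x, ¬ F x u
  · -- root: ach = oF.erase (spx F u), oF.card odd
    have hsp : F u (spx F u) := spx_spec F (root_exists_out hOdd hr)
    have hach : ach F u = (Finset.univ.filter (fun w => F u w)).erase (spx F u) := by
      ext v
      simp only [mem_ach, Finset.mem_erase, Finset.mem_filter, Finset.mem_univ, true_and]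
      constructor
      · rintro ⟨h1, h2⟩
        exact ⟨fun he => h2 ⟨hr, he.symm⟩, h1⟩
      · rintro ⟨h1, h2⟩
        exact ⟨h2, fun he => h1 he.2.symm⟩
    have hodd : Odd (Finset.univ.filter (fun w => F u w)).card := by
      have h1 : {w | F w u} = ∅ := by ext w; simp [hr w]
      have h2 := hOdd u
      unfold udeg at h2
      rw [h1, out_card] at h2
      simpa using h2
    have hspmem : spx F u ∈ (Finset.univ.filter (fun w => F u w)) := by simp [hsp]
    have hec := Finset.card_erase_of_mem hspmem
    rw [hach, hec]
    obtain ⟨t, ht⟩ := hodd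
    exact ⟨⟨t, by omega⟩, by omega⟩
  · -- non-root
    push_neg at hr
    obtain ⟨x, hx⟩ := hr
    have hach : ach F u = (Finset.univ.filter (fun w => F u w)) := by
      ext v
      simp only [mem_ach, Finset.mem_filter, Finset.mem_univ, true_and]
      constructor
      · exact fun h => h.1
      · exact fun h => ⟨h, fun hc => hc.1 x hx⟩
    have hin : {w | F w u} = {x} := by
      ext w; simp only [Set.mem_setOf_eq, Set.mem_singleton_iff]
      exact ⟨fun h => hUniq _ _ _ h hx, fun h => h ▸ hx⟩
    have h2 := hOdd u
    unfold udeg at h2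
    rw [hin, out_card, Set.ncard_singleton] at h2
    obtain ⟨s, hs⟩ := h2
    have heven : Even (Finset.univ.filter (fun w => F u w)).card := ⟨s, by omega⟩
    rw [hach]
    obtain ⟨t, ht⟩ := heven
    exact ⟨⟨t, ht⟩, by omega⟩

end Facts

noncomputable def achEquiv {V : Type*} [Fintype V] (F : V → V → Prop) (u : V) :
    (ach F u) ≃ Fin (ach F u).card :=
  Fintype.equivFinOfCardEq (Fintype.card_coe _)

open Classical in
noncomputable def matchFn {V : Type*} [Fintype V] (F : V → V → Prop) (k : ℕ) (hk : 0 < k)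
    (hA : ∀ u, (ach F u).card ≤ 2*k-2) :
    V × Fin (2*k-1) → V × Fin (2*k-1) := fun a =>
  if hy : a.2.val = 2*k-2 then
    if ∀ x, ¬ F x a.1 then (spx F a.1, a.2)
    else if hm : a.1 ∈ ach F (pax F a.1) then
      (pax F a.1, ⟨(achEquiv F (pax F a.1) ⟨a.1, hm⟩).val, by
        have h1 := (achEquiv F (pax F a.1) ⟨a.1, hm⟩).isLt
        have h2 := hA (pax F a.1); omega⟩)
    else (pax F a.1, a.2)
  else
    if h : a.2.val < (ach F a.1).card then
      (((achEquiv F a.1).symm ⟨a.2.val, h⟩ : (ach F a.1)), ⟨2*k-2, by omega⟩)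
    else
      (a.1, ⟨if Even a.2.val then a.2.val+1 else a.2.val-1, by
        have := a.2.isLt; split <;> omega⟩)

section Eval
variable {V : Type*} [Fintype V] (F : V → V → Prop) (k : ℕ) (hk : 0 < k)
    (hA : ∀ u, (ach F u).card ≤ 2*k-2)

lemma matchFn_y_root (a : V × Fin (2*k-1)) (hy : a.2.val = 2*k-2) (hr : ∀ x, ¬ F x a.1) :
    matchFn F k hk hA a = (spx F a.1, a.2) := by
  simp only [matchFn]
  rw [dif_pos hy, if_pos hr]

lemma matchFn_y_mem (a : V × Fin (2*k-1)) (hy : a.2.val = 2*k-2) (hr : ¬ ∀ x, ¬ F x a.1)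
    {u : V} (hu : pax F a.1 = u) (hm : a.1 ∈ ach F u) :
    (matchFn F k hk hA a).1 = u ∧
      (matchFn F k hk hA a).2.val = (achEquiv F u ⟨a.1, hm⟩).val := by
  subst hu
  simp only [matchFn]
  rw [dif_pos hy, if_neg hr, dif_pos hm]
  exact ⟨rfl, rfl⟩

lemma matchFn_y_sp (a : V × Fin (2*k-1)) (hy : a.2.val = 2*k-2) (hr : ¬ ∀ x, ¬ F x a.1)
    (hm : a.1 ∉ ach F (pax F a.1)) :
    matchFn F k hk hA a = (pax F a.1, a.2) := by
  simp only [matchFn]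
  rw [dif_pos hy, if_neg hr, dif_neg hm]

lemma matchFn_int_lt (a : V × Fin (2*k-1)) (hy : ¬ a.2.val = 2*k-2)
    (h : a.2.val < (ach F a.1).card) :
    (matchFn F k hk hA a).1 = (((achEquiv F a.1).symm ⟨a.2.val, h⟩ : (ach F a.1)) : V) ∧
      (matchFn F k hk hA a).2.val = 2*k-2 := by
  simp only [matchFn]
  rw [dif_neg hy, dif_pos h]
  exact ⟨rfl, rfl⟩

lemma matchFn_int_ge (a : V × Fin (2*k-1)) (hy : ¬ a.2.val = 2*k-2)
    (h : ¬ a.2.val < (ach F a.1).card) :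
    (matchFn F k hk hA a).1 = a.1 ∧
      (matchFn F k hk hA a).2.val = if Even a.2.val then a.2.val+1 else a.2.val-1 := by
  simp only [matchFn]
  rw [dif_neg hy, dif_neg h]
  exact ⟨rfl, rfl⟩

end Eval

/-- If `D` has a weak perfect out-forest, then the constructed graph `G` has a
perfect matching. -/
theorem stmt15 {V : Type*} [Fintype V] (D : V → V → Prop) (k : ℕ) (hk : 0 < k)
    (hcard : Fintype.card V = 2*k) (hirr : Irreflexive D)
    (hF : ∃ F, WeakPerfect D F) :
    ∃ f : V × Fin (2*k-1) → V × Fin (2*k-1),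
      ∀ a, f a ≠ a ∧ f (f a) = a ∧ Gadj D k a (f a) := by
  classical
  obtain ⟨F, hSubd, hIF, hOdd⟩ := hF
  obtain ⟨hAcyc, hUniq⟩ := hIF
  have hirrF : ∀ v, ¬ F v v := fun v h => hAcyc v (Relation.TransGen.single h)
  have hAC := fun u => ach_card (F := F) hOdd hUniq hirrF hcard u
  have hA : ∀ u, (ach F u).card ≤ 2*k-2 := fun u => (hAC u).2
  have hAeven : ∀ u, Even (ach F u).card := fun u => (hAC u).1
  refine ⟨matchFn F k hk hA, ?_⟩
  rintro ⟨v, i⟩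
  set f := matchFn F k hk hA with hfdef
  have hilt := i.isLt
  by_cases hy : i.val = 2*k-2
  · by_cases hr : ∀ x, ¬ F x v
    · -- Case A: v is a root; y_v matched with y of its special child
      have hsp : F v (spx F v) := spx_spec F (root_exists_out hOdd hr)
      have hfa : f (v, i) = (spx F v, i) := matchFn_y_root F k hk hA (v,i) hy hr
      have hpx : pax F (spx F v) = v := pax_eq F hUniq hsp
      have hnr2 : ¬ ∀ x, ¬ F x (spx F v) := fun h => h v hsp
      have hnm : (spx F v) ∉ ach F (pax F (spx F v)) := by
        rw [hpx, mem_ach]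
        intro hc
        exact hc.2 ⟨hr, rfl⟩
      have hfb : f (spx F v, i) = (pax F (spx F v), i) :=
        matchFn_y_sp F k hk hA (spx F v, i) hy hnr2 hnm
      refine ⟨?_, ?_, ?_⟩
      · rw [hfa]
        intro h
        have h1 : spx F v = v := congrArg Prod.fst h
        rw [h1] at hsp
        exact hirrF v hsp
      · rw [hfa, hfb, hpx]
      · rw [hfa]
        exact Or.inr (Or.inl ⟨hSubd hsp, hy⟩)
    · push_neg at hr
      obtain ⟨x, hx⟩ := hr
      have hpx : pax F v = x := pax_eq F hUniq hx
      have hnr : ¬ ∀ y, ¬ F y v := fun h => h x hx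
      by_cases hm : v ∈ ach F x
      · -- Case B: y_v matched with an internal vertex of X_x
        have he := matchFn_y_mem F k hk hA (v,i) hy hnr hpx hm
        have hjlt : (achEquiv F x ⟨v, hm⟩).val < (ach F x).card := (achEquiv F x ⟨v, hm⟩).isLt
        have hjlt2 : (achEquiv F x ⟨v, hm⟩).val < 2*k-2 := lt_of_lt_of_le hjlt (hA x)
        obtain ⟨jv, hjv⟩ : ∃ jf : Fin (2*k-1), jf.val = (achEquiv F x ⟨v, hm⟩).val :=
          ⟨⟨_, lt_of_lt_of_le hjlt2 (by omega)⟩, rfl⟩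
        have hjv2 : jv.val < 2*k-2 := lt_of_eq_of_lt hjv hjlt2
        have hjv3 : jv.val < (ach F x).card := lt_of_eq_of_lt hjv hjlt
        have hfa : f (v,i) = (x, jv) := Prod.ext he.1 (Fin.ext (he.2.trans hjv.symm))
        have he2 := matchFn_int_lt F k hk hA (x, jv)
          (show ¬ jv.val = 2*k-2 by omega) hjv3
        have hsymm : (achEquiv F x).symm ⟨jv.val, hjv3⟩ = ⟨v, hm⟩ := by
          have h1 : (⟨jv.val, hjv3⟩ : Fin (ach F x).card)
              = achEquiv F x ⟨v, hm⟩ := Fin.ext hjv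
          rw [h1, Equiv.symm_apply_apply]
        refine ⟨?_, ?_, ?_⟩
        · rw [hfa]
          intro h
          have h2 : jv.val = i.val := congrArg (fun p => p.2.val) h
          omega
        · rw [hfa]
          refine Prod.ext (he2.1.trans ?_) (Fin.ext (he2.2.trans hy.symm))
          rw [hsymm]
        · rw [hfa]
          exact Or.inr (Or.inr ⟨hSubd hx, hy⟩)
      · -- Case C: v is the special child of the root x; y_v matched with y_x
        have hkey : (∀ y, ¬ F y x) ∧ spx F x = v := by
          by_contra hc
          exact hm ((mem_ach F x v).mpr ⟨hx, hc⟩)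
        have hmp : v ∉ ach F (pax F v) := by rw [hpx]; exact hm
        have hfa : f (v, i) = (x, i) := by
          have h0 := matchFn_y_sp F k hk hA (v,i) hy hnr hmp
          rw [← hpx]
          exact h0
        have hfb : f (x, i) = (spx F x, i) := matchFn_y_root F k hk hA (x,i) hy hkey.1
        refine ⟨?_, ?_, ?_⟩
        · rw [hfa]
          intro h
          have h1 : x = v := congrArg Prod.fst h
          exact hirrF v (h1 ▸ hx)
        · rw [hfa, hfb, hkey.2]
        · rw [hfa]
          exact Or.inr (Or.inr ⟨hSubd hx, hy⟩)
  · by_cases h : i.val < (ach F v).card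
    · -- Case D: internal vertex matched with y of an assigned child
      have he := matchFn_int_lt F k hk hA (v,i) hy h
      have hcm : ((achEquiv F v).symm ⟨i.val, h⟩ : V) ∈ ach F v :=
        ((achEquiv F v).symm ⟨i.val, h⟩).2
      have hFvc : F v ((achEquiv F v).symm ⟨i.val, h⟩ : V) := ((mem_ach F v _).1 hcm).1
      have hpx : pax F ((achEquiv F v).symm ⟨i.val, h⟩ : V) = v := pax_eq F hUniq hFvc
      have hnr : ¬ ∀ x, ¬ F x ((achEquiv F v).symm ⟨i.val, h⟩ : V) := fun hh => hh v hFvc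
      obtain ⟨lf, hlf⟩ : ∃ lf : Fin (2*k-1), lf.val = 2*k-2 := ⟨⟨2*k-2, by omega⟩, rfl⟩
      have hfa : f (v,i) = (((achEquiv F v).symm ⟨i.val, h⟩ : V), lf) :=
        Prod.ext he.1 (Fin.ext (he.2.trans hlf.symm))
      have he2 := matchFn_y_mem F k hk hA (((achEquiv F v).symm ⟨i.val, h⟩ : V), lf)
        (show lf.val = 2*k-2 from hlf) hnr hpx hcm
      have hback : achEquiv F v ⟨((achEquiv F v).symm ⟨i.val, h⟩ : V), hcm⟩ = ⟨i.val, h⟩ := by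
        have h1 : (⟨((achEquiv F v).symm ⟨i.val, h⟩ : V), hcm⟩ : {y // y ∈ ach F v})
            = (achEquiv F v).symm ⟨i.val, h⟩ := rfl
        rw [h1, Equiv.apply_symm_apply]
      refine ⟨?_, ?_, ?_⟩
      · rw [hfa]
        intro hcontra
        have h2 : lf.val = i.val := congrArg (fun p => p.2.val) hcontra
        omega
      · rw [hfa]
        refine Prod.ext he2.1 (Fin.ext ?_)
        rw [he2.2, hback]
      · rw [hfa]
        exact Or.inr (Or.inl ⟨hSubd hFvc, hlf⟩)
    · -- Case E: internal matching edge of the gadget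
      have he := matchFn_int_ge F k hk hA (v,i) hy h
      obtain ⟨s, hs⟩ := hAeven v
      by_cases hev : Even i.val
      · obtain ⟨t, ht⟩ := hev
        have hival : (if Even i.val then i.val+1 else i.val-1) = i.val + 1 :=
          if_pos ⟨t, ht⟩
        obtain ⟨jv, hjv⟩ : ∃ jf : Fin (2*k-1), jf.val = i.val + 1 := ⟨⟨_, by omega⟩, rfl⟩
        have hne : ¬ jv.val = 2*k-2 := by omega
        have hnl : ¬ jv.val < (ach F v).card := by omega
        have he2 := matchFn_int_ge F k hk hA (v, jv) hne hnl
        have hfa : f (v,i) = (v, jv) :=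
          Prod.ext he.1 (Fin.ext ((he.2.trans hival).trans hjv.symm))
        have hnc : ¬ Even jv.val := by
          rintro ⟨r, hr2⟩
          omega
        have hival2 : (if Even jv.val then jv.val+1 else jv.val-1) = i.val := by
          rw [if_neg hnc]
          omega
        refine ⟨?_, ?_, ?_⟩
        · rw [hfa]
          intro hcontra
          have h2 : jv.val = i.val := congrArg (fun p => p.2.val) hcontra
          omega
        · rw [hfa]
          exact Prod.ext he2.1 (Fin.ext ((he2.2.trans hival2)))
        · rw [hfa]
          have hlt2 : jv.val < 2*k-2 := by omega
          exact Or.inl ⟨rfl, Or.inl ⟨hjv.symm, ⟨t, ht⟩, hlt2⟩⟩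
      · have hodd : Odd i.val := Nat.not_even_iff_odd.mp hev
        obtain ⟨t, ht⟩ := hodd
        have hival : (if Even i.val then i.val+1 else i.val-1) = i.val - 1 := if_neg hev
        obtain ⟨jv, hjv⟩ : ∃ jf : Fin (2*k-1), jf.val = i.val - 1 := ⟨⟨_, by omega⟩, rfl⟩
        have hne : ¬ jv.val = 2*k-2 := by omega
        have hnl : ¬ jv.val < (ach F v).card := by omega
        have he2 := matchFn_int_ge F k hk hA (v, jv) hne hnl
        have hfa : f (v,i) = (v, jv) :=
          Prod.ext he.1 (Fin.ext ((he.2.trans hival).trans hjv.symm))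
        have hpc : Even jv.val := ⟨t, by omega⟩
        have hival2 : (if Even jv.val then jv.val+1 else jv.val-1) = i.val := by
          rw [if_pos hpc]
          omega
        refine ⟨?_, ?_, ?_⟩
        · rw [hfa]
          intro hcontra
          have h2 : jv.val = i.val := congrArg (fun p => p.2.val) hcontra
          omega
        · rw [hfa]
          exact Prod.ext he2.1 (Fin.ext ((he2.2.trans hival2)))
        · rw [hfa]
          have hplus : jv.val + 1 = i.val := by omega
          have hlt2 : i.val < 2*k-2 := by omega
          exact Or.inl ⟨rfl, Or.inr ⟨hplus, hpc, hlt2⟩⟩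
end

section
/- Let H be a subdigraph of a digraph D in which every vertex has in-degree at most one and every vertex has odd degree in the underlying graph of H. If C is a directed cycle contained in H, then H with the arcs of C removed still has all in-degrees at most one and all vertices of odd underlying degree; iterating this yields a weak perfect out-forest of D on the same vertex set. -/
/-- Parity preserved when removing a closed walk with unique successors. -/
theorem remove_walk_odd {V : Type*} [Fintype V] (H : V → V → Prop) (m : ℕ)
    (c : ZMod m → V) (hcyc : ∀ i, H (c i) (c (i + 1)))
    (hsucc : ∀ i j, c i = c j → c (i + 1) = c (j + 1))
    (hin : ∀ u v w, H u w → H v w → u = v) (v : V) (h : Odd (udeg H v)) :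
    Odd (udeg (fun a b => H a b ∧ ¬ ∃ i, c i = a ∧ c (i + 1) = b) v) := by
  classical
  set A : Set V := {w | H v w}
  set B : Set V := {w | H w v}
  set A' : Set V := {w | H v w ∧ ¬ ∃ i, c i = v ∧ c (i + 1) = w}
  set B' : Set V := {w | H w v ∧ ¬ ∃ i, c i = w ∧ c (i + 1) = v}
  by_cases hv : ∃ i, c i = v
  · obtain ⟨i₀, hi₀⟩ := hv
    have hsA : c (i₀ + 1) ∈ A := by show H v _; rw [← hi₀]; exact hcyc i₀
    have hpB : c (i₀ - 1) ∈ B := by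
      show H _ v
      have := hcyc (i₀ - 1)
      rw [sub_add_cancel, hi₀] at this
      exact this
    have hA' : A' = A \ {c (i₀ + 1)} := by
      ext w
      constructor
      · rintro ⟨hw, hnr⟩
        refine ⟨hw, ?_⟩
        simp only [Set.mem_singleton_iff]
        rintro rfl
        exact hnr ⟨i₀, hi₀, rfl⟩
      · rintro ⟨hw, hne⟩
        refine ⟨hw, ?_⟩
        rintro ⟨i, hci, rfl⟩
        exact hne (by rw [hsucc i i₀ (hci.trans hi₀.symm)]; rfl)
    have hB' : B' = B \ {c (i₀ - 1)} := by
      ext w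
      constructor
      · rintro ⟨hw, hnr⟩
        refine ⟨hw, ?_⟩
        simp only [Set.mem_singleton_iff]
        rintro rfl
        exact hnr ⟨i₀ - 1, rfl, by rw [sub_add_cancel, hi₀]⟩
      · rintro ⟨hw, hne⟩
        refine ⟨hw, ?_⟩
        rintro ⟨i, rfl, hci⟩
        apply hne
        have h1 : H (c i) v := by rw [← hci]; exact hcyc i
        exact Set.mem_singleton_iff.mpr (hin _ _ _ h1 hpB)
    have hAcard : A'.ncard = A.ncard - 1 := by
      rw [hA']; exact Set.ncard_diff_singleton_of_mem hsA
    have hBcard : B'.ncard = B.ncard - 1 := by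
      rw [hB']; exact Set.ncard_diff_singleton_of_mem hpB
    have hApos : 1 ≤ A.ncard := (Set.ncard_pos A.toFinite).mpr ⟨_, hsA⟩
    have hBpos : 1 ≤ B.ncard := (Set.ncard_pos B.toFinite).mpr ⟨_, hpB⟩
    obtain ⟨k, hk⟩ := h
    have hk' : A.ncard + B.ncard = 2 * k + 1 := hk
    refine ⟨k - 1, ?_⟩
    show A'.ncard + B'.ncard = 2 * (k - 1) + 1
    omega
  · have hA' : A' = A := by
      ext w; simp only [A', A, Set.mem_setOf_eq, and_iff_left_iff_imp]
      rintro - ⟨i, hci, -⟩; exact hv ⟨i, hci⟩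
    have hB' : B' = B := by
      ext w; simp only [B', B, Set.mem_setOf_eq, and_iff_left_iff_imp]
      rintro - ⟨i, -, hci⟩; exact hv ⟨i + 1, hci⟩
    show Odd (A'.ncard + B'.ncard)
    rw [hA', hB']; exact h

section
variable {V : Type*}

theorem walk_of_transGen {H : V → V → Prop} {a b : V} (h : Relation.TransGen H a b) :
    ∃ n : ℕ, ∃ x : ℕ → V, x 0 = a ∧ x (n + 1) = b ∧ ∀ k ≤ n, H (x k) (x (k + 1)) := by
  induction h with
  | @single b' h =>
    exact ⟨0, fun k => if k = 0 then a else b', rfl, rfl, fun k hk => by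
      interval_cases k; simpa using h⟩
  | @tail b' c' _ h ih =>
    obtain ⟨n, x, hx0, hxn, hstep⟩ := ih
    refine ⟨n + 1, fun k => if k ≤ n + 1 then x k else c', by simpa using hx0, by simp, ?_⟩
    intro k hk
    rcases Nat.lt_or_ge k (n + 1) with h1 | h1
    · have : k ≤ n := by omega
      simp only [if_pos (by omega : k ≤ n + 1), if_pos (by omega : k + 1 ≤ n + 1)]
      exact hstep k this
    · have hk1 : k = n + 1 := by omega
      subst hk1
      simp only [if_pos (le_refl _), if_neg (by omega : ¬ n + 1 + 1 ≤ n + 1)]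
      rw [hxn]; exact h

theorem exists_closed_walk {H : V → V → Prop} {v : V} (h : Relation.TransGen H v v)
    (hin : ∀ u v w, H u w → H v w → u = v) :
    ∃ m : ℕ, ∃ c : ZMod m → V, (∀ i, H (c i) (c (i + 1))) ∧
      (∀ i j, c i = c j → c (i + 1) = c (j + 1)) := by
  obtain ⟨n, x, hx0, hxn, hstep⟩ := walk_of_transGen h
  have hval : ∀ i : ZMod (n + 1), (i + 1).val = (i.val + 1) % (n + 1) := by
    intro i
    conv_lhs => rw [show i + 1 = ((i.val + 1 : ℕ) : ZMod (n + 1)) by push_cast [ZMod.natCast_val, ZMod.cast_id]; ring]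
    rw [ZMod.val_natCast]
  have hc : ∀ i : ZMod (n + 1), H (x i.val) (x (i + 1).val) := by
    intro i
    have hival : i.val < n + 1 := ZMod.val_lt i
    rcases Nat.lt_or_ge i.val n with h1 | h1
    · rw [hval i, Nat.mod_eq_of_lt (by omega)]
      exact hstep i.val (by omega)
    · have hival' : i.val = n := by omega
      rw [hval i, hival', Nat.mod_self, hx0, ← hxn]
      exact hstep n le_rfl
  have hback : ∀ i j : ZMod (n + 1), x i.val = x j.val →
      x (i - 1).val = x (j - 1).val := by
    intro i j hij
    have e1 := hc (i - 1)
    have e2 := hc (j - 1)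
    rw [sub_add_cancel] at e1 e2
    rw [← hij] at e2
    exact hin _ _ _ e1 e2
  have claim : ∀ k : ℕ, ∀ i j : ZMod (n + 1), x i.val = x j.val →
      x (i - (k : ZMod (n + 1))).val = x (j - (k : ZMod (n + 1))).val := by
    intro k
    induction k with
    | zero => intro i j hij; simpa using hij
    | succ k ih =>
      intro i j hij
      have := hback _ _ (ih i j hij)
      have e : ∀ a : ZMod (n + 1), a - ((k : ℕ) + 1 : ℕ) = a - (k : ℕ) - 1 := by
        intro a; push_cast; ring
      rw [e i, e j]
      exact this
  refine ⟨n + 1, fun i => x i.val, hc, ?_⟩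
  intro i j hij
  have hn : ((n : ℕ) : ZMod (n + 1)) = -1 := by
    have := ZMod.natCast_self (n + 1)
    push_cast at this
    linear_combination this
  have := claim n i j hij
  rw [hn] at this
  simpa [sub_neg_eq_add] using this
end

theorem forest_of_odd {V : Type*} [Fintype V] : ∀ N : ℕ, ∀ H : V → V → Prop,
    {p : V × V | H p.1 p.2}.ncard ≤ N → (∀ u v w, H u w → H v w → u = v) →
    (∀ v, Odd (udeg H v)) →
    ∃ F, Subd F H ∧ IsOutForest F ∧ ∀ v, Odd (udeg F v) := by
  intro N
  induction N using Nat.strong_induction_on with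
  | _ N IH =>
    intro H hcard hin hodd
    by_cases hirr : Irreflexive (Relation.TransGen H)
    · exact ⟨H, fun a b h => h, ⟨hirr, hin⟩, hodd⟩
    · simp only [Irreflexive, not_forall, not_not] at hirr
      obtain ⟨v, hv⟩ := hirr
      obtain ⟨m, c, hcyc, hsucc⟩ := exists_closed_walk hv hin
      set H' : V → V → Prop := fun a b => H a b ∧ ¬ ∃ i, c i = a ∧ c (i + 1) = b with hH'
      have hsubset : {p : V × V | H' p.1 p.2} ⊂ {p : V × V | H p.1 p.2} := by
        constructor
        · intro p hp; exact hp.1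
        · intro hle
          have := hle (show ((c 0, c (0 + 1)) : V × V) ∈ {p : V × V | H p.1 p.2} from hcyc 0)
          exact this.2 ⟨0, rfl, rfl⟩
      have hlt : {p : V × V | H' p.1 p.2}.ncard < N :=
        lt_of_lt_of_le (Set.ncard_lt_ncard hsubset (Set.toFinite _)) hcard
      obtain ⟨F, hF1, hF2, hF3⟩ := IH _ hlt H' le_rfl
        (fun u v w h1 h2 => hin u v w h1.1 h2.1)
        (fun v => remove_walk_odd H m c hcyc hsucc hin v (hodd v))
      exact ⟨F, fun a b h => (hF1 h).1, hF2, hF3⟩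

/-- Removing the arcs of a directed cycle from a subdigraph `H` of `D` with all
in-degrees at most one and all underlying degrees odd preserves both properties;
iterating yields a weak perfect out-forest of `D` on the same vertex set. -/
theorem stmt16 {V : Type*} [Fintype V] (D H : V → V → Prop) (m : ℕ) (hm : 2 ≤ m)
    (c : ZMod m → V) (hinj : Function.Injective c)
    (hsub : Subd H D) (hin : ∀ u v w, H u w → H v w → u = v)
    (hodd : ∀ v, Odd (udeg H v)) (hcyc : ∀ i, H (c i) (c (i + 1))) :
    (∀ u v w, (H u w ∧ ¬ ∃ i, c i = u ∧ c (i + 1) = w) →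
      (H v w ∧ ¬ ∃ i, c i = v ∧ c (i + 1) = w) → u = v) ∧
    (∀ v, Odd (udeg (fun a b => H a b ∧ ¬ ∃ i, c i = a ∧ c (i + 1) = b) v)) ∧
    (∃ F, Subd F H ∧ IsOutForest F ∧ ∀ v, Odd (udeg F v)) := by
  refine ⟨fun u v w h1 h2 => hin u v w h1.1 h2.1, ?_, ?_⟩
  · intro v
    exact remove_walk_odd H m c hcyc (fun i j hij => by rw [hinj hij]) hin v (hodd v)
  · exact forest_of_odd _ H le_rfl hin hodd
end

section
/- A connected digraph D of even order contains an even out-forest if and only if D contains a spanning subdigraph F that is acyclic, has all in-degrees at most one, and in which every vertex has odd degree in the underlying graph of F. -/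
section Aux

open Relation
attribute [local instance] Classical.propDecidable

variable {V : Type*} {F : V → V → Prop}

lemma aux_merge (hF : IsOutForest F) {a w : V} (ha : ReflTransGen F a w) :
    ∀ {b}, ReflTransGen F b w → ReflTransGen F a b ∨ ReflTransGen F b a := by
  induction ha with
  | refl => intro b hb; exact Or.inr hb
  | tail hay hyw ih =>
    intro b hb
    rcases (Relation.ReflTransGen.cases_tail hb) with rfl | ⟨x, hbx, hxw⟩
    · exact Or.inl (hay.tail hyw)
    · have : x = _ := hF.2 x _ _ hxw hyw
      subst this
      exact ih hbx

lemma aux_common_ancestor (hF : IsOutForest F) {a b : V} (h : SameTree F a b) :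
    ∃ r, ReflTransGen F r a ∧ ReflTransGen F r b := by
  induction h with
  | refl => exact ⟨a, .refl, .refl⟩
  | tail _ hstep ih =>
    obtain ⟨r, hra, hrm⟩ := ih
    rcases hstep with hmw | hwm
    · exact ⟨r, hra, hrm.tail hmw⟩
    · rcases (Relation.ReflTransGen.cases_tail hrm) with h' | ⟨x, hrx, hxm⟩
      · subst h'
        exact ⟨_, (ReflTransGen.single hwm).trans hra, .refl⟩
      · have : x = _ := hF.2 x _ _ hxm hwm
        subst this
        exact ⟨r, hra, hrx⟩

lemma aux_rtg_sameTree {a b : V} (h : ReflTransGen F a b) : SameTree F a b :=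
  ReflTransGen.mono (fun _ _ h => Or.inl h) _ _ h

lemma aux_root_comp (hF : IsOutForest F) {v : V} (hv : ∀ u, ¬ F u v) :
    {w | SameTree F v w} = {w | ReflTransGen F v w} := by
  ext w
  simp only [Set.mem_setOf_eq]
  constructor
  · intro h
    obtain ⟨r, hrv, hrw⟩ := aux_common_ancestor hF h
    rcases (Relation.ReflTransGen.cases_tail hrv) with h' | ⟨x, _, hxv⟩
    · subst h'; exact hrw
    · exact absurd hxv (hv x)
  · exact aux_rtg_sameTree

lemma aux_not_desc_self (hF : IsOutForest F) {v c : V} (hvc : F v c)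
    (h : ReflTransGen F c v) : False :=
  hF.1 v (TransGen.head' hvc h)

lemma aux_desc_disjoint (hF : IsOutForest F) {v c₁ c₂ : V} (h1 : F v c₁) (h2 : F v c₂)
    (hne : c₁ ≠ c₂) : Disjoint {w | ReflTransGen F c₁ w} {w | ReflTransGen F c₂ w} := by
  rw [Set.disjoint_left]
  rintro w hw1 hw2
  rcases aux_merge hF hw1 hw2 with h | h
  · rcases (Relation.ReflTransGen.cases_tail h) with h' | ⟨x, hcx, hxc⟩
    · exact hne h'.symm
    · have : x = v := hF.2 x v _ hxc h2
      subst this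
      exact aux_not_desc_self hF h1 hcx
  · rcases (Relation.ReflTransGen.cases_tail h) with h' | ⟨x, hcx, hxc⟩
    · exact hne h'
    · have : x = v := hF.2 x v _ hxc h1
      subst this
      exact aux_not_desc_self hF h2 hcx

lemma aux_sum_mod_two {α : Type*} (T : Finset α) (f : α → ℕ) :
    (∑ c ∈ T, f c) % 2 = (T.filter (fun c => f c % 2 = 1)).card % 2 := by
  rw [Finset.sum_nat_mod]
  congr 1
  rw [← Finset.sum_filter_add_sum_filter_not T (fun c => f c % 2 = 1)]
  have h1 : ∑ c ∈ T.filter (fun c => f c % 2 = 1), f c % 2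
      = (T.filter (fun c => f c % 2 = 1)).card := by
    rw [Finset.sum_congr rfl (fun c hc => (Finset.mem_filter.mp hc).2)]
    simp
  have h2 : ∑ c ∈ T.filter (fun c => ¬ (f c % 2 = 1)), f c % 2 = 0 := by
    apply Finset.sum_eq_zero
    intro c hc
    have := (Finset.mem_filter.mp hc).2
    omega
  omega

variable [Fintype V]

/-- The number of descendants of `v`: one plus the sum over the children. -/
lemma aux_card_desc (hF : IsOutForest F) (v : V) :
    {w | ReflTransGen F v w}.ncard
      = 1 + ∑ c ∈ (Set.toFinite {c | F v c}).toFinset, {w | ReflTransGen F c w}.ncard := by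
  set T := (Set.toFinite {c | F v c}).toFinset with hT
  have hset : (Set.toFinite {w | ReflTransGen F v w}).toFinset
      = insert v (T.biUnion (fun c => (Set.toFinite {w | ReflTransGen F c w}).toFinset)) := by
    ext w
    simp only [Set.Finite.mem_toFinset, Finset.mem_insert, Finset.mem_biUnion, hT,
      Set.mem_setOf_eq]
    constructor
    · intro h
      rcases Relation.ReflTransGen.cases_head h with rfl | ⟨c, hvc, hcw⟩
      · exact Or.inl rfl
      · exact Or.inr ⟨c, hvc, hcw⟩
    · rintro (rfl | ⟨c, hvc, hcw⟩)
      · exact .refl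
      · exact (ReflTransGen.single hvc).trans hcw
  have hvnot : v ∉ T.biUnion (fun c => (Set.toFinite {w | ReflTransGen F c w}).toFinset) := by
    simp only [Finset.mem_biUnion, Set.Finite.mem_toFinset, hT, Set.mem_setOf_eq, not_exists]
    rintro c ⟨hvc, hcv⟩
    exact aux_not_desc_self hF hvc hcv
  have hdisj : ∀ c₁ ∈ T, ∀ c₂ ∈ T, c₁ ≠ c₂ →
      Disjoint ((Set.toFinite {w | ReflTransGen F c₁ w}).toFinset)
        ((Set.toFinite {w | ReflTransGen F c₂ w}).toFinset) := by
    intro c₁ h1 c₂ h2 hne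
    rw [Finset.disjoint_left]
    intro w hw1 hw2
    simp only [Set.Finite.mem_toFinset] at hw1 hw2
    exact (Set.disjoint_left.mp
      (aux_desc_disjoint hF ((Set.Finite.mem_toFinset _).mp h1)
        ((Set.Finite.mem_toFinset _).mp h2) hne)) hw1 hw2
  rw [Set.ncard_eq_toFinset_card _ (Set.toFinite _), hset,
    Finset.card_insert_of_notMem hvnot, Finset.card_biUnion hdisj]
  rw [Nat.add_comm]
  congr 1
  apply Finset.sum_congr rfl
  intro c _
  rw [Set.ncard_eq_toFinset_card _ (Set.toFinite _)]

end Aux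

section Main
open Relation
attribute [local instance] Classical.propDecidable

variable {V : Type*} [Fintype V]

lemma sameTree_edge_iff {F : V → V → Prop} {v a b : V} (hab : F a b) :
    SameTree F v a ↔ SameTree F v b :=
  ⟨fun h => h.tail (Or.inl hab), fun h => h.tail (Or.inr hab)⟩

/-- Backward handshake: an out-forest with all odd underlying degrees has all
components of even order. -/
lemma even_components {F : V → V → Prop}
    (hodd : ∀ v, Odd (udeg F v)) (v : V) :
    Even ({w | SameTree F v w}.ncard) := by
  classical
  set S : Set V := {w | SameTree F v w} with hS
  have hfin := Set.toFinite S
  set T : Finset V := hfin.toFinset with hT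
  have hmem : ∀ u, u ∈ T ↔ SameTree F v u := by
    intro u; simp [hT, Set.Finite.mem_toFinset, hS]
  -- out and in degrees as filter cards
  have hout : ∀ u : V, {w | F u w}.ncard = ∑ w ∈ Finset.univ, (if F u w then 1 else 0) := by
    intro u
    rw [Set.ncard_eq_toFinset_card _ (Set.toFinite _), ← Finset.card_filter]
    congr 1
    ext w
    simp [Set.Finite.mem_toFinset]
  have hin : ∀ u : V, {w | F w u}.ncard = ∑ w ∈ Finset.univ, (if F w u then 1 else 0) := by
    intro u
    rw [Set.ncard_eq_toFinset_card _ (Set.toFinite _), ← Finset.card_filter]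
    congr 1
    ext w
    simp [Set.Finite.mem_toFinset]
  -- the two sums over the component are equal
  have key : ∑ u ∈ T, {w | F u w}.ncard = ∑ u ∈ T, {w | F w u}.ncard := by
    have e1 : ∑ u ∈ T, {w | F u w}.ncard
        = ∑ a ∈ T, ∑ b ∈ T, (if F a b then 1 else 0) := by
      apply Finset.sum_congr rfl
      intro a ha
      rw [hout a]
      symm
      apply Finset.sum_subset (Finset.subset_univ T)
      intro b _ hb
      by_cases hFab : F a b
      · exact absurd (((hmem b).mpr (((sameTree_edge_iff hFab).mp ((hmem a).mp ha))))) hb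
      · simp [hFab]
    have e2 : ∑ u ∈ T, {w | F w u}.ncard
        = ∑ a ∈ T, ∑ b ∈ T, (if F a b then 1 else 0) := by
      rw [Finset.sum_congr rfl (fun u _ => hin u), Finset.sum_comm]
      symm
      apply Finset.sum_subset (Finset.subset_univ T)
      intro a _ ha
      apply Finset.sum_eq_zero
      intro b hb
      by_cases hFab : F a b
      · exact absurd ((hmem a).mpr ((sameTree_edge_iff hFab).mpr ((hmem b).mp hb))) ha
      · simp [hFab]
    rw [e1, e2]
  -- parity
  have hsum : (∑ u ∈ T, udeg F u) % 2 = 0 := by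
    have : ∑ u ∈ T, udeg F u
        = ∑ u ∈ T, {w | F u w}.ncard + ∑ u ∈ T, {w | F w u}.ncard := by
      rw [← Finset.sum_add_distrib]; rfl
    rw [this, ← key]
    omega
  have hcard : T.card % 2 = 0 := by
    have h1 := aux_sum_mod_two T (udeg F)
    have h2 : T.filter (fun c => udeg F c % 2 = 1) = T := by
      apply Finset.filter_true_of_mem
      intro u _
      exact Nat.odd_iff.mp (hodd u)
    rw [h2] at h1
    omega
  rw [Set.ncard_eq_toFinset_card _ hfin]
  exact Nat.even_iff.mpr hcard

/-- Forward: from an even out-forest, extract a spanning out-forest with all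
underlying degrees odd. -/
lemma forward {D F : V → V → Prop} (hE : EvenOutForest D F) :
    ∃ F', Subd F' D ∧ Irreflexive (Relation.TransGen F') ∧
      (∀ u v w, F' u w → F' v w → u = v) ∧ ∀ v, Odd (udeg F' v) := by
  classical
  obtain ⟨hsub, hF, hev⟩ := hE
  set dsc : V → ℕ := fun w => {x | ReflTransGen F w x}.ncard with hdsc
  refine ⟨fun u w => F u w ∧ dsc w % 2 = 1, fun a b h => hsub h.1, ?_, ?_, ?_⟩
  · intro a h
    exact hF.1 a (TransGen.mono (fun x y (h : F x y ∧ dsc y % 2 = 1) => h.1) _ _ h)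
  · intro u v w h1 h2
    exact hF.2 u v w h1.1 h2.1
  · intro v
    rw [Nat.odd_iff]
    set T : Finset V := (Set.toFinite {c | F v c}).toFinset with hT
    -- the out part
    have hterm1 : {w | F v w ∧ dsc w % 2 = 1}.ncard
        = (T.filter (fun c => dsc c % 2 = 1)).card := by
      rw [Set.ncard_eq_toFinset_card _ (Set.toFinite _)]
      congr 1
      ext w
      simp [hT, Set.Finite.mem_toFinset]
    have hdesc := aux_card_desc hF v
    have hsum := aux_sum_mod_two T dsc
    rw [← hT] at hdesc
    -- udeg of the new forest
    have hudeg : udeg (fun u w => F u w ∧ dsc w % 2 = 1) v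
        = (T.filter (fun c => dsc c % 2 = 1)).card + {u | F u v ∧ dsc v % 2 = 1}.ncard := by
      rw [udeg, hterm1]
    rw [hudeg]
    by_cases hpar : ∃ p, F p v
    · obtain ⟨p, hp⟩ := hpar
      have hone : {u | F u v}.ncard = 1 := by
        have : {u | F u v} = {p} := by
          ext u
          simp only [Set.mem_setOf_eq, Set.mem_singleton_iff]
          exact ⟨fun h => hF.2 u p v h hp, fun h => h ▸ hp⟩
        rw [this, Set.ncard_singleton]
      by_cases hpv : dsc v % 2 = 1
      · have h2 : {u | F u v ∧ dsc v % 2 = 1}.ncard = 1 := by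
          have : {u | F u v ∧ dsc v % 2 = 1} = {u | F u v} := by
            ext u; simp [hpv]
          rw [this, hone]
        rw [h2]
        -- dsc v odd, so sum of children even, so filter card even
        have : dsc v = 1 + ∑ c ∈ T, dsc c := hdesc
        omega
      · have h2 : {u | F u v ∧ dsc v % 2 = 1}.ncard = 0 := by
          have : {u | F u v ∧ dsc v % 2 = 1} = ∅ := by
            ext u; simp [hpv]
          rw [this, Set.ncard_empty]
        rw [h2]
        have : dsc v = 1 + ∑ c ∈ T, dsc c := hdesc
        omega
    · -- root: component equals descendants, even
      push_neg at hpar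
      have hcomp : {w | SameTree F v w} = {w | ReflTransGen F v w} :=
        aux_root_comp hF hpar
      have heven : dsc v % 2 = 0 := by
        have := hev v
        rw [hcomp] at this
        exact Nat.even_iff.mp this
      have h2 : {u | F u v ∧ dsc v % 2 = 1}.ncard = 0 := by
        have : {u | F u v ∧ dsc v % 2 = 1} = ∅ := by
          ext u; simp only [Set.mem_setOf_eq, Set.mem_empty_iff_false, iff_false]
          rintro ⟨h, _⟩; exact hpar u h
        rw [this, Set.ncard_empty]
      rw [h2]
      have : dsc v = 1 + ∑ c ∈ T, dsc c := hdesc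
      omega

end Main

/-- A connected digraph of even order contains an even out-forest iff it contains a
spanning acyclic subdigraph with all in-degrees at most one and all underlying
degrees odd (a weak perfect out-forest). -/
theorem stmt19 {V : Type*} [Fintype V] (D : V → V → Prop)
    (hconn : ∀ a b, SameTree D a b) (heven : Even (Fintype.card V)) :
    (∃ F, EvenOutForest D F) ↔
    (∃ F, Subd F D ∧ Irreflexive (Relation.TransGen F) ∧
      (∀ u v w, F u w → F v w → u = v) ∧ ∀ v, Odd (udeg F v)) := by
  constructor
  · rintro ⟨F, hF⟩
    exact forward hF
  · rintro ⟨F, hsub, hirr, hindeg, hodd⟩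
    exact ⟨F, hsub, ⟨hirr, hindeg⟩, even_components hodd⟩
end
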